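/- arXiv:2503.23025 — 8 statements merged into one kernel-verified Lean document; each statement's English description precedes it below -/
import Mathlib

section
/- Let d ≥ 1, let X_1, …, X_m be subsets of ℝ^d, and let p be a point of X_1. Define sets S_1, …, S_m by S_1 = {p} and S_{a+1} = X_{a+1} ∩ F(S_a, p) for a ≥ 1. Let j be an index with 2 ≤ j ≤ m such that S_a ≠ ∅ for every a with 1 ≤ a ≤ j−1. Then S_j = {x ∈ X_j : the oriented segment from p to x stabs X_1, …, X_j in order}. -/
/-- `Fset S p` is the set of points `y` such that the closed segment from `p` to `y`
intersects `S`. -/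
def Fset {E : Type*} [AddCommGroup E] [Module ℝ E] (S : Set E) (p : E) : Set E :=
  {y | ∃ t ∈ Set.Icc (0:ℝ) 1, p + t • (y - p) ∈ S}

/-- The oriented segment from `x` to `y` stabs the sets `O 1, …, O n` in order. -/
def SegStabsInOrder {E : Type*} [AddCommGroup E] [Module ℝ E]
    (x y : E) (n : ℕ) (O : ℕ → Set E) : Prop :=
  ∃ t : ℕ → ℝ,
    (∀ i, 1 ≤ i → i ≤ n → t i ∈ Set.Icc (0:ℝ) 1) ∧
    (∀ i j, 1 ≤ i → i ≤ j → j ≤ n → t i ≤ t j) ∧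
    (∀ i, 1 ≤ i → i ≤ n → x + t i • (y - x) ∈ O i)

theorem stmt0 (d m : ℕ) (hd : 1 ≤ d)
    (X S : ℕ → Set (EuclideanSpace ℝ (Fin d)))
    (p : EuclideanSpace ℝ (Fin d)) (hp : p ∈ X 1)
    (hS1 : S 1 = {p})
    (hSrec : ∀ a, 1 ≤ a → a + 1 ≤ m → S (a + 1) = X (a + 1) ∩ Fset (S a) p)
    (j : ℕ) (hj2 : 2 ≤ j) (hjm : j ≤ m)
    (hne : ∀ a, 1 ≤ a → a ≤ j - 1 → (S a).Nonempty) :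
    S j = {x | x ∈ X j ∧ SegStabsInOrder p x j X} := by
  clear hne hd
  induction j, hj2 using Nat.le_induction with
  | base =>
    have h2 : S 2 = X 2 ∩ Fset (S 1) p := hSrec 1 le_rfl hjm
    ext x
    simp only [h2, hS1, Set.mem_inter_iff, Set.mem_setOf_eq, SegStabsInOrder, Fset]
    constructor
    · rintro ⟨hx, -⟩
      refine ⟨hx, fun i => if i ≤ 1 then 0 else 1, ?_, ?_, ?_⟩
      · intro i hi1 hi2
        by_cases h : i ≤ 1 <;> simp [h]
      · intro i k hi hik hk
        by_cases h : k ≤ 1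
        · simp [show i ≤ 1 from le_trans hik h, h]
        · simp only [if_neg h]
          split <;> norm_num
      · intro i hi1 hi2
        interval_cases i <;> simp [hp, hx]
    · rintro ⟨hx, -⟩
      exact ⟨hx, 0, by norm_num, by simpa using Set.mem_singleton p⟩
  | succ n hn ih =>
    have hnm : n ≤ m := le_trans (Nat.le_succ n) hjm
    have ihS := ih hnm
    have hrec : S (n + 1) = X (n + 1) ∩ Fset (S n) p := hSrec n (by omega) hjm
    ext x
    simp only [hrec, Set.mem_inter_iff, Set.mem_setOf_eq, Fset]
    constructor
    · rintro ⟨hx, t, ht01, hz⟩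
      rw [ihS] at hz
      obtain ⟨hzX, s, hs01, hsmono, hsmem⟩ := hz
      have hzp : (p + t • (x - p)) - p = t • (x - p) := add_sub_cancel_left p _
      refine ⟨hx, fun i => if i ≤ n then s i * t else 1, ?_, ?_, ?_⟩
      · intro i hi1 hin
        by_cases h : i ≤ n
        · simp only [if_pos h]
          exact ⟨mul_nonneg (hs01 i hi1 h).1 ht01.1,
            mul_le_one₀ (hs01 i hi1 h).2 ht01.1 ht01.2⟩
        · simp [if_neg h]
      · intro i k hi hik hkn
        by_cases hk : k ≤ n
        · have hi' : i ≤ n := le_trans hik hk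
          simp only [if_pos hi', if_pos hk]
          exact mul_le_mul_of_nonneg_right (hsmono i k hi hik hk) ht01.1
        · simp only [if_neg hk]
          by_cases h : i ≤ n
          · simp only [if_pos h]
            exact mul_le_one₀ (hs01 i hi h).2 ht01.1 ht01.2
          · simp [if_neg h]
      · intro i hi1 hin
        by_cases h : i ≤ n
        · simp only [if_pos h]
          have hm := hsmem i hi1 h
          rw [hzp, smul_smul] at hm
          exact hm
        · have hie : i = n + 1 := by omega
          subst hie
          simpa [if_neg h] using hx
    · rintro ⟨hx, t, ht01, htmono, htmem⟩
      refine ⟨hx, t n, ht01 n (by omega) (by omega), ?_⟩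
      rw [ihS]
      refine ⟨htmem n (by omega) (by omega), ?_⟩
      have hzp : (p + t n • (x - p)) - p = t n • (x - p) := add_sub_cancel_left p _
      rcases eq_or_lt_of_le (ht01 n (by omega) (by omega)).1 with h0 | h0
      · refine ⟨fun _ => 0, fun i _ _ => by norm_num, fun i k _ _ _ => le_refl _, ?_⟩
        intro i hi1 hin
        have hti : t i = 0 := le_antisymm
          (h0 ▸ htmono i n hi1 hin (by omega)) (ht01 i hi1 (by omega)).1
        have hm := htmem i hi1 (by omega)
        rw [hti] at hm
        simpa using hm
      · refine ⟨fun i => t i / t n, ?_, ?_, ?_⟩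
        · intro i hi1 hin
          exact ⟨div_nonneg (ht01 i hi1 (by omega)).1 h0.le,
            div_le_one_of_le₀ (htmono i n hi1 hin (by omega)) h0.le⟩
        · intro i k hi hik hkn
          exact (div_le_div_iff_of_pos_right h0).mpr (htmono i k hi hik (by omega))
        · intro i hi1 hin
          have hm := htmem i hi1 (by omega)
          rw [hzp, smul_smul, div_mul_cancel₀ _ (ne_of_gt h0)]
          exact hm
end

section
/- Let τ = (v_1, …, v_m) and σ = (w_1, …, w_s) be polygonal curves in ℝ^d and let r ≥ 0. Suppose there exist points p_1, …, p_m ∈ ℝ^d and indices 1 = j_1 < j_2 < … < j_s = m such that: w_c = p_{j_c} for every c ∈ {1,…,s}; for every c ∈ {1,…,s−1}, the points p_{j_c}, p_{j_c + 1}, …, p_{j_{c+1}} all lie on the segment from w_c to w_{c+1} and appear in this order along that oriented segment; and dist(v_a, p_a) ≤ r for every a ∈ {1,…,m}. Then d_F(σ, τ) ≤ r. -/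
/-- The piecewise-linear map of the polygonal curve with vertices `v 0, …, v (m-1)`,
uniformly parameterized over `[0,1]`. -/
noncomputable def polyMap {E : Type*} [NormedAddCommGroup E] [NormedSpace ℝ E]
    (m : ℕ) (v : ℕ → E) (t : ℝ) : E :=
  let u : ℝ := t * ((m - 1 : ℕ) : ℝ)
  let j : ℕ := min (Int.toNat ⌊u⌋) (m - 1)
  v j + (u - (j : ℝ)) • (v (min (j + 1) (m - 1)) - v j)

/-- The Fréchet distance between two curves `f g : ℝ → E` (regarded as parameterized
over `[0,1]`): the infimum of the bounds `r` achievable by pairs of continuous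
nondecreasing surjective reparameterizations of `[0,1]`. -/
noncomputable def frechetDist {E : Type*} [PseudoMetricSpace E] (f g : ℝ → E) : ℝ :=
  sInf {r : ℝ | ∃ φ ψ : ℝ → ℝ,
      ContinuousOn φ (Set.Icc 0 1) ∧ MonotoneOn φ (Set.Icc 0 1) ∧
      Set.MapsTo φ (Set.Icc 0 1) (Set.Icc 0 1) ∧ Set.SurjOn φ (Set.Icc 0 1) (Set.Icc 0 1) ∧
      ContinuousOn ψ (Set.Icc 0 1) ∧ MonotoneOn ψ (Set.Icc 0 1) ∧
      Set.MapsTo ψ (Set.Icc 0 1) (Set.Icc 0 1) ∧ Set.SurjOn ψ (Set.Icc 0 1) (Set.Icc 0 1) ∧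
      ∀ t ∈ Set.Icc (0:ℝ) 1, dist (f (φ t)) (g (ψ t)) ≤ r}

/-! ### Auxiliary lemmas -/

/-- clamp to `[0,1]` -/
noncomputable def clamp01 (x : ℝ) : ℝ := max 0 (min 1 x)

lemma clamp01_of_ge_one {x : ℝ} (h : 1 ≤ x) : clamp01 x = 1 := by
  simp [clamp01, min_eq_left h]

lemma clamp01_of_nonpos {x : ℝ} (h : x ≤ 0) : clamp01 x = 0 := by
  have : min 1 x = x := min_eq_right (h.trans zero_le_one)
  simp [clamp01, this, max_eq_left h]

lemma clamp01_of_mem {x : ℝ} (h0 : 0 ≤ x) (h1 : x ≤ 1) : clamp01 x = x := by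
  simp [clamp01, min_eq_right h1, max_eq_right h0]

lemma clamp01_mono : Monotone clamp01 :=
  fun _ _ h => max_le_max le_rfl (min_le_min le_rfl h)

lemma clamp01_continuous : Continuous clamp01 := by
  unfold clamp01; fun_prop

/-- piecewise-linear interpolation of values `T 0, …, T (m-1)` over `[0,1]`. -/
noncomputable def phiFun (m : ℕ) (T : ℕ → ℝ) (u : ℝ) : ℝ :=
  T 0 + ∑ a ∈ Finset.range (m-1), (T (a+1) - T a) * clamp01 (u * ((m-1:ℕ):ℝ) - a)

lemma phiFun_continuous (m : ℕ) (T : ℕ → ℝ) : Continuous (phiFun m T) := by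
  unfold phiFun
  refine continuous_const.add (continuous_finset_sum _ fun a _ => ?_)
  exact continuous_const.mul (clamp01_continuous.comp (by fun_prop))

lemma phiFun_mono (m : ℕ) (T : ℕ → ℝ) (hT : ∀ a, a + 1 ≤ m - 1 → T a ≤ T (a+1)) :
    Monotone (phiFun m T) := by
  unfold phiFun
  intro x y hxy
  refine add_le_add le_rfl (Finset.sum_le_sum fun a ha => ?_)
  have h1 : 0 ≤ T (a+1) - T a := sub_nonneg.2 (hT a (Finset.mem_range.1 ha))
  refine mul_le_mul_of_nonneg_left (clamp01_mono ?_) h1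
  have : (0:ℝ) ≤ ((m-1:ℕ):ℝ) := Nat.cast_nonneg _
  nlinarith

lemma phiFun_eval (m : ℕ) (T : ℕ → ℝ) (t : ℝ) (a : ℕ) (ha : a + 1 ≤ m - 1)
    (h1 : (a:ℝ) ≤ t * ((m-1:ℕ):ℝ)) (h2 : t * ((m-1:ℕ):ℝ) ≤ (a:ℝ) + 1) :
    phiFun m T t = T a + (t * ((m-1:ℕ):ℝ) - a) * (T (a+1) - T a) := by
  set x := t * ((m-1:ℕ):ℝ) with hx
  unfold phiFun
  have key : ∀ b ∈ Finset.range (m-1),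
      (T (b+1) - T b) * clamp01 (x - b)
        = (if b < a then T (b+1) - T b else if b = a then (x - a) * (T (a+1) - T a) else 0) := by
    intro b _
    rcases lt_trichotomy b a with h | h | h
    · rw [clamp01_of_ge_one (by
        have : (b:ℝ) + 1 ≤ a := by exact_mod_cast h
        linarith)]
      simp [h]
    · subst h
      rw [clamp01_of_mem (by linarith) (by linarith)]
      simp [mul_comm]
    · rw [clamp01_of_nonpos (by
        have : (a:ℝ) + 1 ≤ b := by exact_mod_cast h
        linarith)]
      simp [Nat.lt_irrefl, (Nat.lt_asymm h), Nat.ne_of_gt h]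
  rw [Finset.sum_congr rfl key]
  have hsub : Finset.range (a+1) ⊆ Finset.range (m-1) := Finset.range_subset_range.2 ha
  rw [← Finset.sum_subset hsub (by
    intro b _ hb
    have hb' : a < b := by
      by_contra h
      exact hb (Finset.mem_range.2 (Nat.lt_succ_of_le (le_of_not_gt h)))
    simp [Nat.lt_asymm hb', Nat.ne_of_gt hb'])]
  rw [Finset.sum_range_succ]
  have : ∀ b ∈ Finset.range a, (if b < a then T (b+1) - T b else if b = a then (x - a) * (T (a+1) - T a) else 0) = T (b+1) - T b := by
    intro b hb; simp [Finset.mem_range.1 hb]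
  rw [Finset.sum_congr rfl this, Finset.sum_range_sub]
  simp [mul_comm]; ring

lemma phiFun_eval_top (m : ℕ) (T : ℕ → ℝ) (t : ℝ)
    (h : ((m-1:ℕ):ℝ) ≤ t * ((m-1:ℕ):ℝ)) :
    phiFun m T t = T (m-1) := by
  unfold phiFun
  have key : ∀ b ∈ Finset.range (m-1),
      (T (b+1) - T b) * clamp01 (t * ((m-1:ℕ):ℝ) - b) = T (b+1) - T b := by
    intro b hb
    rw [clamp01_of_ge_one ?_, mul_one]
    have hb' : b + 1 ≤ m - 1 := Finset.mem_range.1 hb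
    have : (b:ℝ) + 1 ≤ ((m-1:ℕ):ℝ) := by exact_mod_cast hb'
    linarith
  rw [Finset.sum_congr rfl key, Finset.sum_range_sub]
  ring

/-- Evaluating a polygonal curve at parameter `(c+u)/(s-1)` inside piece `c`. -/
lemma polyMap_seg {E : Type*} [NormedAddCommGroup E] [NormedSpace ℝ E]
    (s : ℕ) (w : ℕ → E) (c : ℕ) (hc : c + 1 ≤ s - 1) (u : ℝ) (hu0 : 0 ≤ u) (hu1 : u ≤ 1) :
    polyMap s w (((c:ℝ) + u) / ((s-1:ℕ):ℝ)) = w c + u • (w (c+1) - w c) := by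
  have hs1 : 0 < ((s-1:ℕ):ℝ) := by
    have : 0 < s - 1 := lt_of_lt_of_le (Nat.succ_pos c) hc
    exact_mod_cast this
  have hmul : ((c:ℝ) + u) / ((s-1:ℕ):ℝ) * ((s-1:ℕ):ℝ) = (c:ℝ) + u :=
    div_mul_cancel₀ _ (ne_of_gt hs1)
  unfold polyMap
  simp only [hmul]
  rcases eq_or_lt_of_le hu1 with h1 | h1
  · -- u = 1
    subst h1
    have hfl : ⌊(c:ℝ) + 1⌋ = (c:ℤ) + 1 := by
      have hq : (c:ℝ) + 1 = (((c:ℤ)+1 : ℤ):ℝ) := by push_cast; ring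
      rw [hq, Int.floor_intCast]
    rw [hfl]
    have ht : (Int.toNat ((c:ℤ)+1)) = c + 1 := rfl
    rw [ht, min_eq_left hc]
    have : ((c:ℝ) + 1 - ((c+1:ℕ):ℝ)) = 0 := by push_cast; ring
    rw [this, zero_smul, add_zero, one_smul]
    abel
  · -- u < 1
    have hfl : ⌊(c:ℝ) + u⌋ = (c:ℤ) := by
      rw [Int.floor_eq_iff]
      constructor <;> push_cast <;> linarith
    rw [hfl]
    have ht : (Int.toNat (c:ℤ)) = c := rfl
    have hcle : c ≤ s - 1 := le_trans (Nat.le_succ c) hc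
    rw [ht, min_eq_left hcle, min_eq_left hc]
    congr 1
    · congr 1; ring

lemma polyMap_eval {E : Type*} [NormedAddCommGroup E] [NormedSpace ℝ E]
    (m : ℕ) (v : ℕ → E) (t : ℝ) (h1 : t ≤ 1) :
    polyMap m v t
      = v (⌊t * ((m-1:ℕ):ℝ)⌋.toNat)
        + (t * ((m-1:ℕ):ℝ) - ((⌊t * ((m-1:ℕ):ℝ)⌋.toNat : ℕ) : ℝ))
          • (v (min (⌊t * ((m-1:ℕ):ℝ)⌋.toNat + 1) (m-1)) - v (⌊t * ((m-1:ℕ):ℝ)⌋.toNat)) := by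
  have hle : ⌊t * ((m-1:ℕ):ℝ)⌋.toNat ≤ m - 1 := by
    rw [Int.toNat_le]
    calc ⌊t * ((m-1:ℕ):ℝ)⌋ ≤ ⌊((m-1:ℕ):ℝ)⌋ := by
          apply Int.floor_le_floor
          nlinarith [Nat.cast_nonneg (α := ℝ) (m-1)]
      _ = ((m-1:ℕ):ℤ) := Int.floor_natCast _
  show v (⌊t * ((m-1:ℕ):ℝ)⌋.toNat ⊓ (m-1)) + _ • _ = _
  rw [min_eq_left hle]

/-- the index of the piece of the subdivision containing `a` -/
def pieceIdx (j : ℕ → ℕ) (s' a : ℕ) : ℕ := Nat.findGreatest (fun c => j c ≤ a) s'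

lemma pieceIdx_le (j : ℕ → ℕ) (s' a : ℕ) : pieceIdx j s' a ≤ s' := Nat.findGreatest_le s'

lemma pieceIdx_spec (j : ℕ → ℕ) (s' a : ℕ) (hj0 : j 0 = 0) : j (pieceIdx j s' a) ≤ a :=
  Nat.findGreatest_spec (P := fun c => j c ≤ a) (Nat.zero_le s')
    (by show j 0 ≤ a; rw [hj0]; exact Nat.zero_le a)

lemma pieceIdx_gt (j : ℕ → ℕ) (s' a : ℕ) (h : pieceIdx j s' a < s') :
    a < j (pieceIdx j s' a + 1) := by
  have := Nat.findGreatest_is_greatest (P := fun c => j c ≤ a) (n := s')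
    (k := pieceIdx j s' a + 1) (Nat.lt_succ_self _) h
  omega

lemma pieceIdx_eq (j : ℕ → ℕ) (s' a c : ℕ) (hc : c ≤ s') (hca : j c ≤ a)
    (habove : ∀ n, c < n → n ≤ s' → a < j n) : pieceIdx j s' a = c := by
  rw [pieceIdx, Nat.findGreatest_eq_iff]
  exact ⟨hc, fun _ => hca, fun n hn1 hn2 => by have := habove n hn1 hn2; omega⟩

lemma frechetDist_le_of_witness {E : Type*} [PseudoMetricSpace E] (f g : ℝ → E) (r : ℝ)
    (φ ψ : ℝ → ℝ)
    (h1 : ContinuousOn φ (Set.Icc 0 1)) (h2 : MonotoneOn φ (Set.Icc 0 1))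
    (h3 : Set.MapsTo φ (Set.Icc 0 1) (Set.Icc 0 1)) (h4 : Set.SurjOn φ (Set.Icc 0 1) (Set.Icc 0 1))
    (h5 : ContinuousOn ψ (Set.Icc 0 1)) (h6 : MonotoneOn ψ (Set.Icc 0 1))
    (h7 : Set.MapsTo ψ (Set.Icc 0 1) (Set.Icc 0 1)) (h8 : Set.SurjOn ψ (Set.Icc 0 1) (Set.Icc 0 1))
    (h9 : ∀ t ∈ Set.Icc (0:ℝ) 1, dist (f (φ t)) (g (ψ t)) ≤ r) :
    frechetDist f g ≤ r := by
  apply csInf_le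
  · refine ⟨0, fun r' hr' => ?_⟩
    obtain ⟨φ', ψ', _, _, _, _, _, _, _, _, hb⟩ := hr'
    exact le_trans dist_nonneg (hb 0 (by norm_num))
  · exact ⟨φ, ψ, h1, h2, h3, h4, h5, h6, h7, h8, h9⟩

lemma dist_segment_le {E : Type*} [NormedAddCommGroup E] [NormedSpace ℝ E]
    (x y x' y' : E) (θ r : ℝ) (h0 : 0 ≤ θ) (h1 : θ ≤ 1)
    (hx : dist x x' ≤ r) (hy : dist y y' ≤ r) :
    dist (x + θ • (y - x)) (x' + θ • (y' - x')) ≤ r := by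
  have e1 : x + θ • (y - x) = (1 - θ) • x + θ • y := by
    rw [smul_sub, sub_smul, one_smul]; abel
  have e2 : x' + θ • (y' - x') = (1 - θ) • x' + θ • y' := by
    rw [smul_sub, sub_smul, one_smul]; abel
  rw [e1, e2]
  calc dist ((1 - θ) • x + θ • y) ((1 - θ) • x' + θ • y')
      ≤ dist ((1-θ) • x) ((1-θ) • x') + dist (θ • y) (θ • y') := dist_add_add_le _ _ _ _
    _ = (1-θ) * dist x x' + θ * dist y y' := by
        rw [dist_smul₀, dist_smul₀, Real.norm_eq_abs, Real.norm_eq_abs,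
          abs_of_nonneg (by linarith : (0:ℝ) ≤ 1 - θ), abs_of_nonneg h0]
    _ ≤ (1-θ) * r + θ * r := by
        have hd1 : (0:ℝ) ≤ 1 - θ := by linarith
        exact add_le_add (mul_le_mul_of_nonneg_left hx hd1) (mul_le_mul_of_nonneg_left hy h0)
    _ = r := by ring

theorem stmt2 (d m s : ℕ) (hm : 1 ≤ m) (hs : 1 ≤ s)
    (v : ℕ → EuclideanSpace ℝ (Fin d))   -- vertices v 0, …, v (m-1) of τ
    (w : ℕ → EuclideanSpace ℝ (Fin d))   -- vertices w 0, …, w (s-1) of σ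
    (p : ℕ → EuclideanSpace ℝ (Fin d))   -- points p 0, …, p (m-1)
    (r : ℝ) (hr : 0 ≤ r)
    (j : ℕ → ℕ) (hj0 : j 0 = 0) (hjlast : j (s - 1) = m - 1)
    (hjmono : ∀ c, c + 1 ≤ s - 1 → j c < j (c + 1))
    (hw : ∀ c, c ≤ s - 1 → w c = p (j c))
    (horder : ∀ c, c + 1 ≤ s - 1 → ∃ t : ℕ → ℝ,
        (∀ a, j c ≤ a → a ≤ j (c + 1) → t a ∈ Set.Icc (0:ℝ) 1) ∧
        (∀ a b, j c ≤ a → a ≤ b → b ≤ j (c + 1) → t a ≤ t b) ∧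
        (∀ a, j c ≤ a → a ≤ j (c + 1) → p a = w c + t a • (w (c + 1) - w c)))
    (hdist : ∀ a, a ≤ m - 1 → dist (v a) (p a) ≤ r) :
    frechetDist (polyMap s w) (polyMap m v) ≤ r := by
  classical
  rcases eq_or_lt_of_le hs with hs1 | hs2
  · -- degenerate case s = 1 (hence m = 1): both curves are constant
    have hsval : s = 1 := hs1.symm
    subst hsval
    have hm1 : m = 1 := by
      have h0 : j (1 - 1) = j 0 := by norm_num
      rw [h0, hj0] at hjlast
      omega
    subst hm1
    have hconst : ∀ (q : ℕ → EuclideanSpace ℝ (Fin d)) (t : ℝ), polyMap 1 q t = q 0 := by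
      intro q t
      unfold polyMap
      norm_num
    refine frechetDist_le_of_witness _ _ r (fun t => t) (fun t => t)
      continuousOn_id (fun x _ y _ h => h) (fun x hx => hx) (fun x hx => ⟨x, hx, rfl⟩)
      continuousOn_id (fun x _ y _ h => h) (fun x hx => hx) (fun x hx => ⟨x, hx, rfl⟩)
      (fun t _ => ?_)
    rw [hconst, hconst]
    have hw0 : w 0 = p 0 := by simpa [hj0] using hw 0 (by norm_num)
    rw [hw0, dist_comm]
    exact hdist 0 (by norm_num)
  · -- main case: s ≥ 2 (hence m ≥ 2)
    obtain ⟨s', rfl⟩ : ∃ s', s = s' + 2 := ⟨s - 2, by omega⟩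
    have hss : s' + 2 - 1 = s' + 1 := rfl
    rw [hss] at hjlast hjmono hw horder
    -- strict monotonicity chain for j
    have jstrict : ∀ c₁ c₂, c₁ < c₂ → c₂ ≤ s' + 1 → j c₁ < j c₂ := by
      intro c₁ c₂ h hle
      induction c₂ with
      | zero => omega
      | succ n ih =>
        rcases Nat.lt_succ_iff_lt_or_eq.mp h with h' | h'
        · exact lt_trans (ih h' (by omega)) (hjmono n (by omega))
        · subst h'; exact hjmono c₁ hle
    have jchain : ∀ c₁ c₂, c₁ ≤ c₂ → c₂ ≤ s' + 1 → j c₁ ≤ j c₂ := by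
      intro c₁ c₂ h hle
      rcases eq_or_lt_of_le h with h' | h'
      · exact h' ▸ le_rfl
      · exact le_of_lt (jstrict c₁ c₂ h' hle)
    have hm2 : 2 ≤ m := by
      have h1 : 0 < j 1 := by
        have := jstrict 0 1 (by norm_num) (by omega)
        omega
      have h2 : j 1 ≤ j (s' + 1) := jchain 1 (s'+1) (by omega) le_rfl
      omega
    obtain ⟨m', rfl⟩ : ∃ m', m = m' + 2 := ⟨m - 2, by omega⟩
    have hmm : m' + 2 - 1 = m' + 1 := rfl
    rw [hmm] at hjlast hdist
    -- choose the order parameters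
    have horder' : ∀ c, ∃ t : ℕ → ℝ, c + 1 ≤ s' + 1 →
        (∀ a, j c ≤ a → a ≤ j (c + 1) → t a ∈ Set.Icc (0:ℝ) 1) ∧
        (∀ a b, j c ≤ a → a ≤ b → b ≤ j (c + 1) → t a ≤ t b) ∧
        (∀ a, j c ≤ a → a ≤ j (c + 1) → p a = w c + t a • (w (c + 1) - w c)) := by
      intro c
      by_cases h : c + 1 ≤ s' + 1
      · obtain ⟨t, ht⟩ := horder c h
        exact ⟨t, fun _ => ht⟩
      · exact ⟨fun _ => 0, fun h' => absurd h' h⟩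
    choose tc htc using horder'
    -- adjusted parameters, forced to 0 and 1 at the segment endpoints
    set tp : ℕ → ℕ → ℝ := fun c a => if a = j c then 0 else if a = j (c+1) then 1 else tc c a
      with htp
    -- facts about the piece index
    have hCle : ∀ a, pieceIdx j s' a ≤ s' := fun a => pieceIdx_le j s' a
    have hCj : ∀ a, j (pieceIdx j s' a) ≤ a := fun a => pieceIdx_spec j s' a hj0
    have hCub : ∀ a, a + 1 ≤ m' + 1 → a + 1 ≤ j (pieceIdx j s' a + 1) := by
      intro a ha
      rcases eq_or_lt_of_le (hCle a) with h | h
      · rw [h, hjlast]; omega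
      · have := pieceIdx_gt j s' a h
        omega
    -- membership and monotonicity of tp on piece c
    have tp_mem : ∀ c x, c + 1 ≤ s' + 1 → j c ≤ x → x ≤ j (c+1) → tp c x ∈ Set.Icc (0:ℝ) 1 := by
      intro c x hc hx1 hx2
      rw [htp]
      dsimp only
      split_ifs with h1 h2
      · exact ⟨le_rfl, zero_le_one⟩
      · exact ⟨zero_le_one, le_rfl⟩
      · exact (htc c hc).1 x hx1 hx2
    have tp_mono : ∀ c x y, c + 1 ≤ s' + 1 → j c ≤ x → x ≤ y → y ≤ j (c+1) → tp c x ≤ tp c y := by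
      intro c x y hc hx hxy hy
      have hjc : j c < j (c+1) := hjmono c hc
      by_cases hx1 : x = j c
      · have hz : tp c x = 0 := by rw [htp]; simp [hx1]
        rw [hz]
        exact (tp_mem c y hc (by omega) hy).1
      by_cases hy2 : y = j (c+1)
      · have ho : tp c y = 1 := by
          rw [htp]; dsimp only
          rw [if_neg (by omega), if_pos hy2]
        rw [ho]
        exact (tp_mem c x hc hx (le_trans hxy hy)).2
      have hx2 : x ≠ j (c+1) := by omega
      have hy1 : y ≠ j c := by omega
      have ex : tp c x = tc c x := by rw [htp]; simp [hx1, hx2]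
      have ey : tp c y = tc c y := by rw [htp]; simp [hy1, hy2]
      rw [ex, ey]
      exact (htc c hc).2.1 x y hx hxy (by omega)
    -- the formula for p in terms of tp
    have pform : ∀ c a, c + 1 ≤ s' + 1 → j c ≤ a → a ≤ j (c+1) →
        p a = w c + tp c a • (w (c+1) - w c) := by
      intro c a hc ha1 ha2
      rw [htp]
      dsimp only
      split_ifs with h1 h2
      · rw [h1, ← hw c (by omega), zero_smul, add_zero]
      · rw [h2, ← hw (c+1) (by omega), one_smul]
        abel
      · exact (htc c hc).2.2 a ha1 ha2
    -- the global parameter sequence T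
    set T : ℕ → ℝ := fun a => ((pieceIdx j s' a : ℝ) + tp (pieceIdx j s' a) a) / ((s' + 1 : ℕ) : ℝ)
      with hT
    have hKpos : (0:ℝ) < ((s' + 1 : ℕ) : ℝ) := by positivity
    -- the key piece decomposition
    have piece : ∀ a, a + 1 ≤ m' + 1 → ∃ c : ℕ, c + 1 ≤ s' + 1 ∧ j c ≤ a ∧ a + 1 ≤ j (c+1) ∧
        T a = ((c:ℝ) + tp c a) / ((s' + 1 : ℕ) : ℝ) ∧
        T (a+1) = ((c:ℝ) + tp c (a+1)) / ((s' + 1 : ℕ) : ℝ) := by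
      intro a ha
      have hc1 : pieceIdx j s' a ≤ s' := hCle a
      have hja : j (pieceIdx j s' a) ≤ a := hCj a
      have hub : a + 1 ≤ j (pieceIdx j s' a + 1) := hCub a ha
      refine ⟨pieceIdx j s' a, by omega, hja, hub, by rw [hT], ?_⟩
      rcases eq_or_lt_of_le hub with heq | hlt
      · -- a + 1 = j (c+1): the new point is the start of the next piece
        have hjc : j (pieceIdx j s' a) < j (pieceIdx j s' a + 1) := hjmono _ (by omega)
        have htpval : tp (pieceIdx j s' a) (a+1) = 1 := by
          rw [htp]; dsimp only
          rw [if_neg (by omega), if_pos heq]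
        rw [htpval]
        by_cases hcs : pieceIdx j s' a = s'
        · -- next piece does not exist
          have hCa1 : pieceIdx j s' (a+1) = pieceIdx j s' a :=
            pieceIdx_eq j s' (a+1) (pieceIdx j s' a) hc1 (by omega) (fun n hn1 hn2 => by omega)
          rw [hT]; dsimp only
          rw [hCa1, htpval]
        · -- the next piece starts exactly at a+1
          have hCa1 : pieceIdx j s' (a+1) = pieceIdx j s' a + 1 := by
            refine pieceIdx_eq j s' (a+1) (pieceIdx j s' a + 1) (by omega) (by omega)
              (fun n hn1 hn2 => ?_)
            have : j (pieceIdx j s' a + 1) < j n := jstrict _ n hn1 (by omega)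
            omega
          have htpz : tp (pieceIdx j s' a + 1) (a+1) = 0 := by
            rw [htp]; dsimp only
            rw [if_pos heq]
          rw [hT]; dsimp only
          rw [hCa1, htpz]
          push_cast
          ring
      · -- a + 1 < j (c+1): stay in the same piece
        have hCa1 : pieceIdx j s' (a+1) = pieceIdx j s' a := by
          refine pieceIdx_eq j s' (a+1) (pieceIdx j s' a) hc1 (by omega) (fun n hn1 hn2 => ?_)
          have : j (pieceIdx j s' a + 1) ≤ j n := jchain _ n hn1 (by omega)
          omega
        rw [hT]; dsimp only
        rw [hCa1]
    -- T is monotone on consecutive indices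
    have Tmono : ∀ a, a + 1 ≤ m' + 1 → T a ≤ T (a+1) := by
      intro a ha
      obtain ⟨c, hc, hja, hja1, e1, e2⟩ := piece a ha
      rw [e1, e2]
      have hstep := tp_mono c a (a+1) hc hja (Nat.le_succ a) (by omega)
      gcongr
    -- endpoint values of T
    have T0 : T 0 = 0 := by
      have hc0 : pieceIdx j s' 0 = 0 :=
        pieceIdx_eq j s' 0 0 (Nat.zero_le _) hj0.le
          (fun n hn1 hn2 => by have := jstrict 0 n hn1 (by omega); omega)
      have htp0 : tp 0 0 = 0 := by
        rw [htp]; dsimp only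
        rw [if_pos hj0.symm]
      rw [hT]; dsimp only
      rw [hc0, htp0]
      norm_num
    have Tlast : T (m'+1) = 1 := by
      have hcl : pieceIdx j s' (m'+1) = s' :=
        pieceIdx_eq j s' (m'+1) s' le_rfl
          (by have := jchain s' (s'+1) (Nat.le_succ s') le_rfl; omega)
          (fun n hn1 hn2 => by omega)
      have htpl : tp s' (m'+1) = 1 := by
        have hne : m'+1 ≠ j s' := by
          have := jstrict s' (s'+1) (Nat.lt_succ_self _) le_rfl
          omega
        rw [htp]; dsimp only
        rw [if_neg hne, if_pos hjlast.symm]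
      rw [hT]; dsimp only
      rw [hcl, htpl]
      have : ((s':ℝ) + 1) = ((s'+1:ℕ):ℝ) := by push_cast; ring
      rw [this, div_self (ne_of_gt hKpos)]
    -- the reparameterization φ
    have φcont : Continuous (phiFun (m'+2) T) := phiFun_continuous _ _
    have φmono : Monotone (phiFun (m'+2) T) := phiFun_mono _ _ (fun a ha => Tmono a ha)
    have φ0 : phiFun (m'+2) T 0 = 0 := by
      rw [phiFun_eval (m'+2) T 0 0 (by omega) (by norm_num) (by norm_num), T0]
      norm_num
    have φ1 : phiFun (m'+2) T 1 = 1 := by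
      rw [phiFun_eval_top (m'+2) T 1 (by rw [one_mul])]
      exact Tlast
    have φmaps : Set.MapsTo (phiFun (m'+2) T) (Set.Icc 0 1) (Set.Icc 0 1) := by
      intro x hx
      exact ⟨φ0 ▸ φmono hx.1, φ1 ▸ φmono hx.2⟩
    have φsurj : Set.SurjOn (phiFun (m'+2) T) (Set.Icc 0 1) (Set.Icc 0 1) := by
      have := intermediate_value_Icc (by norm_num : (0:ℝ) ≤ 1) φcont.continuousOn
      rw [φ0, φ1] at this
      exact this
    refine frechetDist_le_of_witness _ _ r (phiFun (m'+2) T) (fun t => t)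
      φcont.continuousOn (φmono.monotoneOn _) φmaps φsurj
      continuousOn_id (fun x _ y _ h => h) (fun x hx => hx) (fun x hx => ⟨x, hx, rfl⟩) ?_
    intro t ht
    obtain ⟨ht0, ht1⟩ := ht
    -- evaluate the v-curve
    have hev := polyMap_eval (m'+2) v t ht1
    simp only [show m'+2-1 = m'+1 from rfl] at hev
    set x := t * ((m'+1:ℕ):ℝ) with hxdef
    set a := ⌊x⌋.toNat with hadef
    have hx0 : 0 ≤ x := mul_nonneg ht0 (Nat.cast_nonneg _)
    have hxle : x ≤ ((m'+1:ℕ):ℝ) := by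
      rw [hxdef]
      nlinarith [Nat.cast_nonneg (α := ℝ) (m'+1)]
    have hfl0 : 0 ≤ ⌊x⌋ := Int.floor_nonneg.2 hx0
    have hcast : ((a:ℕ):ℝ) = ((⌊x⌋:ℤ):ℝ) := by
      rw [hadef]
      exact_mod_cast congrArg (fun z : ℤ => (z:ℝ)) (Int.toNat_of_nonneg hfl0)
    have hca : (a:ℝ) ≤ x := by rw [hcast]; exact Int.floor_le x
    have hca1 : x < (a:ℝ) + 1 := by rw [hcast]; exact Int.lt_floor_add_one x
    have hale : a ≤ m'+1 := by
      rw [hadef, Int.toNat_le]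
      calc ⌊x⌋ ≤ ⌊((m'+1:ℕ):ℝ)⌋ := Int.floor_le_floor hxle
        _ = ((m'+1:ℕ):ℤ) := Int.floor_natCast _
    clear_value x a
    clear hadef hfl0
    rcases eq_or_lt_of_le hale with heq | hlt
    · -- a = m'+1 : the endpoint
      have hxeq : x = ((m'+1:ℕ):ℝ) := le_antisymm hxle (by rw [← heq]; exact hca)
      have hφt : phiFun (m'+2) T t = 1 := by
        rw [phiFun_eval_top (m'+2) T t (by
          show ((m'+1:ℕ):ℝ) ≤ t * ((m'+1:ℕ):ℝ)
          rw [← hxdef, hxeq])]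
        exact Tlast
      have h1w : polyMap (s'+2) w 1 = w (s'+1) := by
        have h1 : (1:ℝ) = ((s':ℝ) + 1) / ((s'+1:ℕ):ℝ) := by
          rw [show ((s':ℝ) + 1) = ((s'+1:ℕ):ℝ) from by push_cast; ring,
            div_self (ne_of_gt hKpos)]
        rw [h1]
        have := polyMap_seg (s'+2) w s' (by omega) 1 zero_le_one le_rfl
        simp only [show s'+2-1 = s'+1 from rfl] at this
        rw [this, one_smul]
        abel
      have hveq : polyMap (m'+2) v t = v (m'+1) := by
        rw [hev]
        have hz : x - ((a:ℕ):ℝ) = 0 := by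
          rw [hxeq, heq]; push_cast; ring
        rw [hz, zero_smul, add_zero, heq]
      rw [hφt, h1w, hveq]
      have hwp : w (s'+1) = p (m'+1) := by rw [hw (s'+1) le_rfl, hjlast]
      rw [hwp, dist_comm]
      exact hdist (m'+1) le_rfl
    · -- a ≤ m' : interior segment
      have ha1 : a + 1 ≤ m' + 1 := by omega
      have hmin : min (a+1) (m'+1) = a+1 := min_eq_left (by omega)
      rw [hmin] at hev
      have hφt := phiFun_eval (m'+2) T t a (by omega)
        (by simp only [show m'+2-1 = m'+1 from rfl]; rw [← hxdef]; exact hca)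
        (by simp only [show m'+2-1 = m'+1 from rfl]; rw [← hxdef]; exact le_of_lt hca1)
      simp only [show m'+2-1 = m'+1 from rfl] at hφt
      rw [← hxdef] at hφt
      obtain ⟨c, hc, hja, hja1, e1, e2⟩ := piece a ha1
      have hl0 : 0 ≤ x - (a:ℝ) := by linarith
      have hl1 : x - (a:ℝ) ≤ 1 := by linarith
      have hα := tp_mem c a hc hja (by omega)
      have hβ := tp_mem c (a+1) hc (by omega) (by omega)
      have hαβ := tp_mono c a (a+1) hc hja (Nat.le_succ a) (by omega)
      have hd0 : 0 ≤ tp c (a+1) - tp c a := sub_nonneg.2 hαβ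
      have hu0 : 0 ≤ tp c a + (x - (a:ℝ)) * (tp c (a+1) - tp c a) := by
        have := mul_nonneg hl0 hd0
        linarith [hα.1]
      have hu1 : tp c a + (x - (a:ℝ)) * (tp c (a+1) - tp c a) ≤ 1 := by
        have := mul_le_mul_of_nonneg_right hl1 hd0
        rw [one_mul] at this
        linarith [hβ.2]
      have hφt2 : phiFun (m'+2) T t
          = ((c:ℝ) + (tp c a + (x - (a:ℝ)) * (tp c (a+1) - tp c a))) / ((s'+1:ℕ):ℝ) := by
        rw [hφt, e1, e2]
        field_simp
        ring
      have hw1 := polyMap_seg (s'+2) w c (by omega)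
        (tp c a + (x - (a:ℝ)) * (tp c (a+1) - tp c a)) hu0 hu1
      simp only [show s'+2-1 = s'+1 from rfl] at hw1
      rw [hφt2, hw1, hev]
      have hpa := pform c a hc hja (by omega)
      have hpa1 := pform c (a+1) hc (by omega) (by omega)
      have hkey : w c + (tp c a + (x - (a:ℝ)) * (tp c (a+1) - tp c a)) • (w (c+1) - w c)
          = p a + (x - (a:ℝ)) • (p (a+1) - p a) := by
        rw [hpa, hpa1]
        module
      rw [hkey]
      exact dist_segment_le _ _ _ _ (x - (a:ℝ)) r hl0 hl1
        (by rw [dist_comm]; exact hdist a (by omega))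
        (by rw [dist_comm]; exact hdist (a+1) (by omega))
end

section
/- Let a, b, c ∈ ℝ^d and let x, y ∈ ℝ^d. Then the Fréchet distance between the three-vertex polygonal curve (a, b, c) and the two-vertex curve (x, y) is at least (1/2) · dist(b, [a, c]), where [a,c] denotes the closed line segment from a to c and dist(b, [a,c]) is the distance from b to that segment. -/
/-!
Reparameterizations of width at most `r` match the vertices `a, b, c` of the first curve, in this
order, to points `p, q, s` of the segment `[x, y]`, each vertex within `r` of its partner.
Monotonicity forces `q ∈ [p, s]`, and the same convex combination of `a` and `c` lies within `r`
of `q`, hence within `2r` of `b`.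
-/

open Set Metric AffineMap

section NormedSpace

variable {E : Type*} [NormedAddCommGroup E] [NormedSpace ℝ E]

lemma polyMap_mem_segment (m : ℕ) (v : ℕ → E) {t : ℝ} (ht : t ∈ Icc (0 : ℝ) 1) :
    ∃ i k : ℕ, polyMap m v t ∈ segment ℝ (v i) (v k) := by
  set u : ℝ := t * ((m - 1 : ℕ) : ℝ)
  set j : ℕ := min (Int.toNat ⌊u⌋) (m - 1) with hj
  have hu0 : 0 ≤ u := mul_nonneg ht.1 (Nat.cast_nonneg _)
  have hum : u ≤ ((m - 1 : ℕ) : ℝ) := mul_le_of_le_one_left (Nat.cast_nonneg _) ht.2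
  have hju : (j : ℝ) ≤ u := by
    calc (j : ℝ) ≤ (⌊u⌋₊ : ℝ) := by rw [← Int.floor_toNat]; exact_mod_cast min_le_left _ _
      _ ≤ u := Nat.floor_le hu0
  have huj : u ≤ j + 1 := by
    rcases min_choice (Int.toNat ⌊u⌋) (m - 1) with h | h
    · rw [hj, h, Int.floor_toNat]; exact (Nat.lt_floor_add_one u).le
    · rw [hj, h]; linarith
  refine ⟨j, min (j + 1) (m - 1), ?_⟩
  rw [segment_eq_image_lineMap]
  exact ⟨u - j, ⟨by linarith, by linarith⟩, by rw [lineMap_apply_module', add_comm]; rfl⟩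

lemma isBounded_image_polyMap (m : ℕ) {v : ℕ → E} (hv : Bornology.IsBounded (range v)) :
    Bornology.IsBounded (polyMap m v '' Icc 0 1) := by
  refine (isBounded_convexHull.2 hv).subset ?_
  rintro _ ⟨t, ht, rfl⟩
  obtain ⟨i, k, hik⟩ := polyMap_mem_segment m v ht
  exact segment_subset_convexHull (mem_range_self i) (mem_range_self k) hik

lemma polyMap_two (v : ℕ → E) {s : ℝ} (hs : s ∈ Icc (0 : ℝ) 1) :
    polyMap 2 v s = lineMap (v 0) (v 1) s := by
  rw [lineMap_apply_module', add_comm]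
  rcases eq_or_lt_of_le hs.2 with rfl | hs1
  · norm_num [polyMap]
  · norm_num [polyMap, Int.floor_eq_zero_iff.2 ⟨hs.1, hs1⟩]

lemma polyMap_three_zero (v : ℕ → E) : polyMap 3 v 0 = v 0 := by
  norm_num [polyMap]

lemma polyMap_three_half (v : ℕ → E) : polyMap 3 v (1 / 2) = v 1 := by
  norm_num [polyMap]

lemma polyMap_three_one (v : ℕ → E) : polyMap 3 v 1 = v 2 := by
  norm_num [polyMap, show Int.toNat 2 = 2 from rfl]

lemma lineMap_mem_segment_lineMap (x y : E) {s₁ s₂ s₃ : ℝ} (h₁₂ : s₁ ≤ s₂) (h₂₃ : s₂ ≤ s₃) :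
    lineMap x y s₂ ∈ segment ℝ (lineMap x y s₁) (lineMap x y s₃) := by
  rw [← image_segment]
  exact mem_image_of_mem _ (by rw [segment_eq_Icc (h₁₂.trans h₂₃)]; exact ⟨h₁₂, h₂₃⟩)

lemma infDist_segment_le_of_mem_segment {a b c p q s : E} {r : ℝ} (hq : q ∈ segment ℝ p s)
    (ha : dist a p ≤ r) (hb : dist b q ≤ r) (hc : dist c s ≤ r) :
    infDist b (segment ℝ a c) ≤ 2 * r := by
  obtain ⟨θ, μ, hθ, hμ, hθμ, rfl⟩ := hq
  have hmem : θ • a + μ • c ∈ segment ℝ a c := ⟨θ, μ, hθ, hμ, hθμ, rfl⟩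
  have hclose : dist (θ • p + μ • s) (θ • a + μ • c) ≤ r :=
    calc dist (θ • p + μ • s) (θ • a + μ • c)
        ≤ dist (θ • p) (θ • a) + dist (μ • s) (μ • c) := dist_add_add_le _ _ _ _
      _ = θ * dist a p + μ * dist c s := by
          rw [dist_smul₀, dist_smul₀, Real.norm_of_nonneg hθ, Real.norm_of_nonneg hμ,
            dist_comm p, dist_comm s]
      _ ≤ θ * r + μ * r := by gcongr
      _ = r := by rw [← add_mul, hθμ, one_mul]
  calc infDist b (segment ℝ a c) ≤ dist b (θ • a + μ • c) := infDist_le_dist_of_mem hmem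
    _ ≤ dist b (θ • p + μ • s) + dist (θ • p + μ • s) (θ • a + μ • c) := dist_triangle _ _ _
    _ ≤ 2 * r := by linarith

end NormedSpace

/-- Boundedness makes the set of widths nonempty, so that its `sInf` is not the junk value `0`. -/
lemma le_frechetDist {E : Type*} [PseudoMetricSpace E] {f g : ℝ → E} {L : ℝ}
    (hf : Bornology.IsBounded (f '' Icc 0 1)) (hg : Bornology.IsBounded (g '' Icc 0 1))
    (h : ∀ φ ψ : ℝ → ℝ, MonotoneOn φ (Icc 0 1) → SurjOn φ (Icc 0 1) (Icc 0 1) →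
      MonotoneOn ψ (Icc 0 1) → MapsTo ψ (Icc 0 1) (Icc 0 1) →
      ∀ r, (∀ t ∈ Icc (0 : ℝ) 1, dist (f (φ t)) (g (ψ t)) ≤ r) → L ≤ r) :
    L ≤ frechetDist f g := by
  obtain ⟨C, hC⟩ := isBounded_iff.1 (hf.union hg)
  refine le_csInf ⟨C, id, id, continuousOn_id, monotoneOn_id, mapsTo_id _, surjOn_id _,
    continuousOn_id, monotoneOn_id, mapsTo_id _, surjOn_id _, fun t ht => ?_⟩ ?_
  · exact hC (Or.inl (mem_image_of_mem f ht)) (Or.inr (mem_image_of_mem g ht))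
  · rintro r ⟨φ, ψ, -, hφ, -, hφs, -, hψ, hψm, -, hr⟩
    exact h φ ψ hφ hφs hψ hψm r hr

theorem stmt6 (d : ℕ) (a b c x y : EuclideanSpace ℝ (Fin d)) :
    (1 / 2 : ℝ) * Metric.infDist b (segment ℝ a c) ≤
      frechetDist (polyMap 3 (fun i => if i = 0 then a else if i = 1 then b else c))
        (polyMap 2 (fun i => if i = 0 then x else y)) := by
  have hv : range (fun i : ℕ => if i = 0 then a else if i = 1 then b else c) ⊆ {a, b, c} := by
    rintro _ ⟨i, rfl⟩; dsimp only; split_ifs <;> simp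
  have hw : range (fun i : ℕ => if i = 0 then x else y) ⊆ {x, y} := by
    rintro _ ⟨i, rfl⟩; dsimp only; split_ifs <;> simp
  refine le_frechetDist (isBounded_image_polyMap 3 ((toFinite _).subset hv).isBounded)
    (isBounded_image_polyMap 2 ((toFinite _).subset hw).isBounded) ?_
  intro φ ψ hφ hφs hψ hψm r hr
  obtain ⟨ta, hta, hφa⟩ := hφs (⟨le_rfl, zero_le_one⟩ : (0 : ℝ) ∈ Icc 0 1)
  obtain ⟨tb, htb, hφb⟩ := hφs (⟨by norm_num, by norm_num⟩ : (1 / 2 : ℝ) ∈ Icc 0 1)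
  obtain ⟨tc, htc, hφc⟩ := hφs (⟨zero_le_one, le_rfl⟩ : (1 : ℝ) ∈ Icc 0 1)
  have hab : ψ ta ≤ ψ tb := hψ hta htb (hφ.reflect_lt hta htb (by norm_num [hφa, hφb])).le
  have hbc : ψ tb ≤ ψ tc := hψ htb htc (hφ.reflect_lt htb htc (by norm_num [hφb, hφc])).le
  have ha := hr ta hta
  have hb := hr tb htb
  have hc := hr tc htc
  rw [hφa, polyMap_three_zero, polyMap_two _ (hψm hta)] at ha
  rw [hφb, polyMap_three_half, polyMap_two _ (hψm htb)] at hb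
  rw [hφc, polyMap_three_one, polyMap_two _ (hψm htc)] at hc
  have hbound := infDist_segment_le_of_mem_segment (lineMap_mem_segment_lineMap x y hab hbc)
    (by simpa using ha) (by simpa using hb) (by simpa using hc)
  linarith
end

section
/- Let a, b, c ∈ ℝ^d and let r = dist(b, [a, c]) be the distance from b to the closed line segment from a to c. Then there exist points x, y ∈ ℝ^d such that the Fréchet distance between the two-vertex curve (x, y) and the three-vertex polygonal curve (a, b, c) is at most r/2. (Explicitly, one may take x and y to be the translates of a and c by the vector (z' − z), where z is the point of [a,c] nearest to b and z' is the midpoint of the segment from z to b.) -/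
section aux
variable {E : Type*} [NormedAddCommGroup E] [NormedSpace ℝ E]

lemma polyMap2_eq (x y : E) {t : ℝ} (h0 : 0 ≤ t) (h1 : t ≤ 1) :
    polyMap 2 (fun i => if i = 0 then x else y) t = x + t • (y - x) := by
  rcases eq_or_lt_of_le h1 with h | h
  · subst h
    simp [polyMap]
  · have hf : ⌊t⌋ = 0 := by
      rw [Int.floor_eq_iff] <;> push_cast <;> constructor <;> linarith
    simp [polyMap, hf]

lemma polyMap3_left (a b c : E) {t : ℝ} (h0 : 0 ≤ t) (h1 : t ≤ 1/2) :
    polyMap 3 (fun i => if i = 0 then a else if i = 1 then b else c) t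
      = a + (2*t) • (b - a) := by
  rcases eq_or_lt_of_le h1 with h | h
  · subst h
    norm_num [polyMap]
  · have hf : ⌊t * 2⌋ = 0 := by
      rw [Int.floor_eq_iff] <;> push_cast <;> constructor <;> linarith
    simp [polyMap, hf, mul_comm]

lemma polyMap3_right (a b c : E) {t : ℝ} (h0 : 1/2 ≤ t) (h1 : t ≤ 1) :
    polyMap 3 (fun i => if i = 0 then a else if i = 1 then b else c) t
      = b + (2*t - 1) • (c - b) := by
  rcases eq_or_lt_of_le h1 with h | h
  · subst h
    have h2 : Int.toNat 2 = 2 := rfl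
    norm_num [polyMap, h2]
  · have hf : ⌊t * 2⌋ = 1 := by
      rw [Int.floor_eq_iff] <;> push_cast <;> constructor <;> linarith
    norm_num [polyMap, hf, mul_comm]

end aux

set_option maxHeartbeats 1000000 in
theorem stmt7 (d : ℕ) (a b c : EuclideanSpace ℝ (Fin d)) :
    ∃ x y : EuclideanSpace ℝ (Fin d),
      frechetDist (polyMap 2 (fun i => if i = 0 then x else y))
          (polyMap 3 (fun i => if i = 0 then a else if i = 1 then b else c))
        ≤ Metric.infDist b (segment ℝ a c) / 2 := by
  -- the segment is compact and nonempty, so the inf distance is attained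
  have hcpt : IsCompact (segment ℝ a c) := by
    rw [segment_eq_image]
    exact (isCompact_Icc).image (by continuity)
  obtain ⟨z, hz, hzd⟩ := hcpt.exists_infDist_eq_dist ⟨a, left_mem_segment ℝ a c⟩ b
  rw [segment_eq_image] at hz
  obtain ⟨s, hs, hsz⟩ := hz
  obtain ⟨hs0, hs1⟩ := hs
  set v : EuclideanSpace ℝ (Fin d) := (1/2 : ℝ) • (b - z) with hv
  refine ⟨a + v, c + v, ?_⟩
  set r : ℝ := Metric.infDist b (segment ℝ a c) with hr
  have hvnorm : ‖v‖ = r / 2 := by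
    rw [hv, norm_smul, hzd, dist_eq_norm]
    simp [abs_of_nonneg]
    ring
  -- reparameterizations
  set φ : ℝ → ℝ := fun t => if t ≤ 1/2 then 2*t*s else s + (2*t - 1)*(1 - s) with hφ
  have hφc : Continuous φ := by
    apply Continuous.if_le (by continuity) (by continuity) continuous_id continuous_const
    intro t ht
    simp only [id] at ht
    subst ht; norm_num
  have hφmono : Monotone φ := by
    intro t₁ t₂ hle
    simp only [hφ]
    split_ifs with h₁ h₂ h₂
    · nlinarith
    · nlinarith
    · linarith
    · nlinarith
  have hφmaps : Set.MapsTo φ (Set.Icc 0 1) (Set.Icc 0 1) := by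
    intro t ht
    obtain ⟨ht0, ht1⟩ := ht
    simp only [hφ]
    split_ifs with h
    · constructor <;> nlinarith
    · constructor <;> nlinarith
  have hφ0 : φ 0 = 0 := by simp [hφ]
  have hφ1 : φ 1 = 1 := by norm_num [hφ]
  have hφsurj : Set.SurjOn φ (Set.Icc 0 1) (Set.Icc 0 1) := by
    have := intermediate_value_Icc (by norm_num : (0:ℝ) ≤ 1) (hφc.continuousOn)
    rw [hφ0, hφ1] at this
    exact this
  apply csInf_le
  · refine ⟨0, fun w hw => ?_⟩
    obtain ⟨φ', ψ', _, _, _, _, _, _, _, _, hdist⟩ := hw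
    exact le_trans dist_nonneg (hdist 0 (by norm_num))
  refine ⟨φ, id, hφc.continuousOn, hφmono.monotoneOn _, hφmaps, hφsurj,
    continuous_id.continuousOn, monotone_id.monotoneOn _, Set.mapsTo_id _,
    (Set.surjOn_id _), ?_⟩
  intro t ht
  obtain ⟨ht0, ht1⟩ := ht
  have hφt := hφmaps ⟨ht0, ht1⟩
  rw [polyMap2_eq _ _ hφt.1 hφt.2]
  have hyx : (c + v) - (a + v) = c - a := by abel
  rw [hyx]
  rw [dist_eq_norm]
  by_cases h : t ≤ 1/2
  · simp only [id]
    rw [polyMap3_left a b c ht0 h]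
    have hφt' : φ t = 2*t*s := by simp only [hφ]; rw [if_pos h]
    have key : (a + v + φ t • (c - a)) - (a + (2*t) • (b - a)) = (1 - 4*t) • v := by
      rw [hφt', hv, ← hsz]
      module
    rw [key, norm_smul, hvnorm]
    have : |1 - 4*t| ≤ 1 := by rw [abs_le]; constructor <;> linarith
    have hr0 : 0 ≤ r / 2 := by
      rw [← hvnorm]; exact norm_nonneg _
    calc |1 - 4*t| * (r/2) ≤ 1 * (r/2) := by nlinarith
      _ = r/2 := one_mul _
  · push_neg at h
    simp only [id]
    rw [polyMap3_right a b c h.le ht1]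
    have hφt' : φ t = s + (2*t - 1)*(1 - s) := by simp only [hφ]; rw [if_neg (not_le.mpr h)]
    have key : (a + v + φ t • (c - a)) - (b + (2*t - 1) • (c - b)) = (4*t - 3) • v := by
      rw [hφt', hv, ← hsz]
      module
    rw [key, norm_smul, hvnorm]
    have : |4*t - 3| ≤ 1 := by rw [abs_le]; constructor <;> linarith
    have hr0 : 0 ≤ r / 2 := by rw [← hvnorm]; exact norm_nonneg _
    calc |4*t - 3| * (r/2) ≤ 1 * (r/2) := by nlinarith
      _ = r/2 := one_mul _
end

section
/- Let σ = (w_1, …, w_s) and τ = (v_1, …, v_m) be polygonal curves in ℝ^d and let z ∈ ℝ^d. Let σ∘(z) = (w_1, …, w_s, z) and τ∘(z) = (v_1, …, v_m, z) be the curves obtained by appending z as a final vertex to σ and to τ, respectively. Then d_F(σ∘(z), τ∘(z)) ≤ d_F(σ, τ). -/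
section Aux

variable {E : Type*} [NormedAddCommGroup E] [NormedSpace ℝ E]

lemma polyMap_one (s : ℕ) (w : ℕ → E) : polyMap s w 1 = w (s-1) := by
  simp only [polyMap, one_mul, Int.floor_natCast, Int.toNat_natCast, min_self, sub_self,
    zero_smul, add_zero]

lemma polyMap_bounded (s : ℕ) (hs : 1 ≤ s) (w : ℕ → E) :
    ∃ C, ∀ t ∈ Set.Icc (0:ℝ) 1, ‖polyMap s w t‖ ≤ C := by
  set S := ∑ i ∈ Finset.range s, ‖w i‖ with hS
  refine ⟨(1 + 4*(s:ℝ)) * S, ?_⟩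
  intro t ht
  simp only [polyMap]
  set u := t * ((s-1:ℕ):ℝ) with hu
  set j := min (⌊u⌋.toNat) (s-1) with hj
  have hsum : ∀ k, k < s → ‖w k‖ ≤ S := fun k hk =>
    Finset.single_le_sum (fun i _ => norm_nonneg (w i)) (Finset.mem_range.mpr hk)
  have hSnn : 0 ≤ S := Finset.sum_nonneg fun i _ => norm_nonneg _
  have hjs : j < s := by omega
  have hj2 : min (j+1) (s-1) < s := by omega
  have hcnn : (0:ℝ) ≤ ((s-1:ℕ):ℝ) := Nat.cast_nonneg _
  have hcs : ((s-1:ℕ):ℝ) ≤ (s:ℝ) := Nat.cast_le.mpr (by omega)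
  have hu_abs : |u| ≤ (s:ℝ) := by
    rw [hu, abs_mul, abs_of_nonneg hcnn]
    have h1 : |t| ≤ 1 := abs_le.mpr ⟨by linarith [ht.1], ht.2⟩
    nlinarith
  have hja : (j:ℝ) ≤ (s:ℝ) := Nat.cast_le.mpr hjs.le
  have hcoef : |u - (j:ℝ)| ≤ 2*(s:ℝ) := by
    have h1 := abs_sub_abs_le_abs_sub u (j:ℝ)
    have h2 : |u - (j:ℝ)| ≤ |u| + |(j:ℝ)| := abs_sub _ _
    rw [abs_of_nonneg (Nat.cast_nonneg j : (0:ℝ) ≤ (j:ℝ))] at h2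
    linarith
  calc ‖w j + (u - (j:ℝ)) • (w (min (j+1) (s-1)) - w j)‖
      ≤ ‖w j‖ + ‖(u - (j:ℝ)) • (w (min (j+1) (s-1)) - w j)‖ := norm_add_le _ _
    _ = ‖w j‖ + |u - (j:ℝ)| * ‖w (min (j+1) (s-1)) - w j‖ := by
        rw [norm_smul, Real.norm_eq_abs]
    _ ≤ S + 2*(s:ℝ) * (S + S) := by
        have h3 : ‖w (min (j+1) (s-1)) - w j‖ ≤ S + S := by
          calc ‖w (min (j+1) (s-1)) - w j‖ ≤ ‖w (min (j+1) (s-1))‖ + ‖w j‖ := norm_sub_le _ _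
            _ ≤ S + S := add_le_add (hsum _ hj2) (hsum _ hjs)
        have := mul_le_mul hcoef h3 (norm_nonneg _) (by positivity)
        have h4 := hsum j hjs
        nlinarith [abs_nonneg (u - (j:ℝ))]
    _ ≤ (1 + 4*(s:ℝ)) * S := by nlinarith [(Nat.one_le_cast (α := ℝ)).mpr hs]

lemma lemA (s : ℕ) (hs : 1 ≤ s) (w : ℕ → E) (z : E) (x : ℝ) (hx0 : 0 ≤ x) (hx1 : x ≤ 1) :
    polyMap (s+1) (fun i => if i = s then z else w i) (((s-1:ℕ):ℝ)/(s:ℝ) * x)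
      = polyMap s w x := by
  have hs0 : (s:ℝ) ≠ 0 := Nat.cast_ne_zero.mpr (by omega)
  have hu : ((s-1:ℕ):ℝ)/(s:ℝ) * x * ((s:ℕ):ℝ) = x * ((s-1:ℕ):ℝ) := by
    field_simp
  simp only [polyMap, Nat.add_sub_cancel, hu]
  have hcnn : (0:ℝ) ≤ ((s-1:ℕ):ℝ) := Nat.cast_nonneg _
  have hu0 : 0 ≤ x * ((s-1:ℕ):ℝ) := mul_nonneg hx0 hcnn
  have huc : x * ((s-1:ℕ):ℝ) ≤ ((s-1:ℕ):ℝ) := mul_le_of_le_one_left hcnn hx1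
  have hfl : ⌊x * ((s-1:ℕ):ℝ)⌋ ≤ ((s-1:ℕ):ℤ) := by
    calc ⌊x * ((s-1:ℕ):ℝ)⌋ ≤ ⌊((s-1:ℕ):ℝ)⌋ := Int.floor_le_floor huc
      _ = ((s-1:ℕ):ℤ) := Int.floor_natCast _
  have hfl0 : 0 ≤ ⌊x * ((s-1:ℕ):ℝ)⌋ := Int.floor_nonneg.mpr hu0
  have htn : (⌊x * ((s-1:ℕ):ℝ)⌋).toNat ≤ s - 1 := by omega
  rw [min_eq_left (htn.trans (by omega)), min_eq_left htn]
  set j := (⌊x * ((s-1:ℕ):ℝ)⌋).toNat with hjdef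
  have hjs : j ≠ s := by omega
  rw [if_neg hjs]
  by_cases hcase : j = s - 1
  · have hflq : ⌊x * ((s-1:ℕ):ℝ)⌋ = ((s-1:ℕ):ℤ) := by omega
    have hge : ((s-1:ℕ):ℝ) ≤ x * ((s-1:ℕ):ℝ) := by
      have := Int.floor_le (x * ((s-1:ℕ):ℝ))
      rw [hflq] at this
      exact_mod_cast this
    have hueq : x * ((s-1:ℕ):ℝ) - (j:ℝ) = 0 := by
      have : x * ((s-1:ℕ):ℝ) = ((s-1:ℕ):ℝ) := le_antisymm huc hge
      rw [this, hcase]; ring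
    rw [hueq]
    simp
  · have hjlt : j + 1 ≤ s - 1 := by omega
    rw [min_eq_left (by omega : j + 1 ≤ s), min_eq_left hjlt, if_neg (by omega : ¬ (j+1 = s))]

lemma lemB (s : ℕ) (hs : 1 ≤ s) (w : ℕ → E) (z : E) (l : ℝ) (hl0 : 0 ≤ l) (hl1 : l ≤ 1) :
    polyMap (s+1) (fun i => if i = s then z else w i) ((((s-1:ℕ):ℝ) + l)/(s:ℝ))
      = w (s-1) + l • (z - w (s-1)) := by
  have hs0 : (s:ℝ) ≠ 0 := Nat.cast_ne_zero.mpr (by omega)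
  have hcast : ((s-1:ℕ):ℝ) = (s:ℝ) - 1 := by
    rw [Nat.cast_sub hs, Nat.cast_one]
  have hu : (((s-1:ℕ):ℝ) + l)/(s:ℝ) * ((s:ℕ):ℝ) = ((s-1:ℕ):ℝ) + l := by
    field_simp
  simp only [polyMap, Nat.add_sub_cancel, hu]
  by_cases hl : l < 1
  · have hfl : ⌊((s-1:ℕ):ℝ) + l⌋ = ((s-1:ℕ):ℤ) := by
      rw [Int.floor_eq_iff]
      push_cast
      constructor <;> linarith
    rw [hfl, Int.toNat_natCast, min_eq_left (by omega : s - 1 ≤ s),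
      min_eq_right (by omega : s ≤ s - 1 + 1), if_neg (by omega : ¬ (s-1 = s)), if_pos rfl]
    have hl2 : ((s-1:ℕ):ℝ) + l - ((s-1:ℕ):ℝ) = l := by ring
    rw [hl2]
  · have hl1' : l = 1 := le_antisymm hl1 (not_lt.mp hl)
    subst hl1'
    have hueq : ((s-1:ℕ):ℝ) + 1 = ((s:ℕ):ℝ) := by rw [hcast]; ring
    rw [hueq]
    simp only [Int.floor_natCast, Int.toNat_natCast, min_self, sub_self, zero_smul, add_zero,
      if_pos rfl]
    rw [one_smul]
    abel

lemma dist_segment (p q z : E) (l : ℝ) (h0 : 0 ≤ l) (h1 : l ≤ 1) :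
    dist (p + l • (z - p)) (q + l • (z - q)) ≤ dist p q := by
  have key : (p + l • (z - p)) - (q + l • (z - q)) = (1 - l) • (p - q) := by
    module
  rw [dist_eq_norm, key, norm_smul, Real.norm_eq_abs, abs_of_nonneg (by linarith),
    dist_eq_norm]
  nlinarith [norm_nonneg (p - q)]

end Aux

lemma phi_one (φ : ℝ → ℝ) (hm : MonotoneOn φ (Set.Icc 0 1))
    (hmt : Set.MapsTo φ (Set.Icc 0 1) (Set.Icc 0 1))
    (hsu : Set.SurjOn φ (Set.Icc 0 1) (Set.Icc 0 1)) : φ 1 = 1 := by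
  obtain ⟨x, hx, hfx⟩ := hsu (Set.right_mem_Icc.mpr zero_le_one)
  have h1 : φ x ≤ φ 1 := hm hx (Set.right_mem_Icc.mpr zero_le_one) hx.2
  have h2 := (hmt (Set.right_mem_Icc.mpr zero_le_one)).2
  rw [hfx] at h1
  linarith

noncomputable def appReparam (s : ℕ) (φ : ℝ → ℝ) : ℝ → ℝ := fun t =>
  if t ≤ 1/2 then (((s-1:ℕ):ℝ)/(s:ℝ)) * φ (max 0 (min (2*t) 1))
  else (((s-1:ℕ):ℝ) + (2*t-1))/(s:ℝ)

lemma appReparam_left (s : ℕ) (φ : ℝ → ℝ) (t : ℝ) (h0 : 0 ≤ t) (h : t ≤ 1/2) :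
    appReparam s φ t = (((s-1:ℕ):ℝ)/(s:ℝ)) * φ (2*t) := by
  rw [appReparam, if_pos h]
  congr 2
  rw [min_eq_left (by linarith), max_eq_right (by linarith)]

lemma appReparam_right (s : ℕ) (φ : ℝ → ℝ) (t : ℝ) (h : ¬ t ≤ 1/2) :
    appReparam s φ t = (((s-1:ℕ):ℝ) + (2*t-1))/(s:ℝ) := if_neg h

lemma appReparam_props (s : ℕ) (hs : 1 ≤ s) (φ : ℝ → ℝ)
    (hc : ContinuousOn φ (Set.Icc 0 1)) (hm : MonotoneOn φ (Set.Icc 0 1))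
    (hmt : Set.MapsTo φ (Set.Icc 0 1) (Set.Icc 0 1))
    (hsu : Set.SurjOn φ (Set.Icc 0 1) (Set.Icc 0 1)) :
    ContinuousOn (appReparam s φ) (Set.Icc 0 1) ∧ MonotoneOn (appReparam s φ) (Set.Icc 0 1) ∧
    Set.MapsTo (appReparam s φ) (Set.Icc 0 1) (Set.Icc 0 1) ∧
    Set.SurjOn (appReparam s φ) (Set.Icc 0 1) (Set.Icc 0 1) := by
  have hsR : (1:ℝ) ≤ (s:ℝ) := Nat.one_le_cast.mpr hs
  have hspos : (0:ℝ) < (s:ℝ) := by linarith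
  have hcast : ((s-1:ℕ):ℝ) = (s:ℝ) - 1 := by rw [Nat.cast_sub hs, Nat.cast_one]
  set a : ℝ := ((s-1:ℕ):ℝ)/(s:ℝ) with ha
  have ha0 : 0 ≤ a := by positivity
  have ha1 : a ≤ 1 := by rw [ha, hcast, div_le_one hspos]; linarith
  have hphi1 : φ 1 = 1 := phi_one φ hm hmt hsu
  have hclamp_mem : ∀ t : ℝ, max 0 (min (2*t) 1) ∈ Set.Icc (0:ℝ) 1 :=
    fun t => ⟨le_max_left _ _, max_le (by norm_num) (min_le_right _ _)⟩
  have hclamp_mono : Monotone (fun t : ℝ => max 0 (min (2*t) 1)) := by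
    intro x y hxy
    exact max_le_max le_rfl (min_le_min (by linarith) le_rfl)
  -- MapsTo
  have hmaps : Set.MapsTo (appReparam s φ) (Set.Icc 0 1) (Set.Icc 0 1) := by
    intro t ht
    by_cases h : t ≤ 1/2
    · rw [appReparam, if_pos h]
      have hmem := hmt (hclamp_mem t)
      constructor
      · exact mul_nonneg ha0 hmem.1
      · exact mul_le_one₀ ha1 hmem.1 hmem.2
    · rw [appReparam, if_neg h]
      push_neg at h
      constructor
      · apply div_nonneg _ hspos.le
        have : (0:ℝ) ≤ ((s-1:ℕ):ℝ) := Nat.cast_nonneg _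
        linarith
      · rw [div_le_one hspos, hcast]
        have := ht.2
        linarith
  -- Monotone
  have hmono : MonotoneOn (appReparam s φ) (Set.Icc 0 1) := by
    intro x hx y hy hxy
    by_cases h1 : x ≤ 1/2
    · by_cases h2 : y ≤ 1/2
      · rw [appReparam, if_pos h1, appReparam, if_pos h2]
        exact mul_le_mul_of_nonneg_left
          (hm (hclamp_mem x) (hclamp_mem y) (hclamp_mono hxy)) ha0
      · rw [appReparam, if_pos h1, appReparam, if_neg h2]
        push_neg at h2
        have hb1 : (((s-1:ℕ):ℝ)/(s:ℝ)) * φ (max 0 (min (2*x) 1)) ≤ a := by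
          rw [ha]
          have := (hmt (hclamp_mem x)).2
          nlinarith [(hmt (hclamp_mem x)).1]
        have hb2 : a ≤ (((s-1:ℕ):ℝ) + (2*y-1))/(s:ℝ) := by
          rw [ha, div_le_div_iff₀ hspos hspos]
          nlinarith
        linarith
    · have h2 : ¬ y ≤ 1/2 := fun hy2 => h1 (hxy.trans hy2)
      rw [appReparam, if_neg h1, appReparam, if_neg h2]
      rw [div_le_div_iff₀ hspos hspos]
      nlinarith
  -- Continuity
  have hcont : Continuous (appReparam s φ) := by
    apply Continuous.if_le
    · apply Continuous.mul continuous_const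
      apply hc.comp_continuous
      · exact continuous_const.max ((continuous_const.mul continuous_id).min continuous_const)
      · exact hclamp_mem
    · fun_prop
    · exact continuous_id
    · exact continuous_const
    · intro t ht
      rw [ht]
      have : max (0:ℝ) (min (2*(1/2)) 1) = 1 := by norm_num
      rw [this, hphi1, mul_one]
      ring
  -- SurjOn
  have hsurj : Set.SurjOn (appReparam s φ) (Set.Icc 0 1) (Set.Icc 0 1) := by
    intro y hy
    by_cases hya : y ≤ a
    · by_cases has : a = 0
      · have hy0 : y = 0 := le_antisymm (has ▸ hya) hy.1
        refine ⟨0, Set.left_mem_Icc.mpr zero_le_one, ?_⟩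
        rw [appReparam, if_pos (by norm_num)]
        rw [← ha, has, hy0, zero_mul]
      · have hapos : 0 < a := lt_of_le_of_ne ha0 (Ne.symm has)
        obtain ⟨x, hx, hfx⟩ := hsu (Set.mem_Icc.mpr ⟨div_nonneg hy.1 ha0,
          (div_le_one hapos).mpr hya⟩)
        refine ⟨x/2, ⟨by linarith [hx.1], by linarith [hx.2]⟩, ?_⟩
        rw [appReparam_left s φ (x/2) (by linarith [hx.1]) (by linarith [hx.2])]
        have : 2 * (x/2) = x := by ring
        rw [this, hfx, ← ha]
        field_simp
    · push_neg at hya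
      refine ⟨((s:ℝ)*(y-1)+2)/2, ?_, ?_⟩
      · constructor
        · have : (s:ℝ)*y > (s:ℝ)*a := by
            apply mul_lt_mul_of_pos_left hya hspos
          rw [ha] at this
          rw [hcast] at this
          have h5 : (s:ℝ) * (((s:ℝ)-1)/(s:ℝ)) = (s:ℝ)-1 := by field_simp
          nlinarith
        · nlinarith [hy.2]
      · have hnot : ¬ ((s:ℝ)*(y-1)+2)/2 ≤ 1/2 := by
          push_neg
          have : (s:ℝ)*y > (s:ℝ)*a := mul_lt_mul_of_pos_left hya hspos
          rw [ha, hcast] at this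
          have h5 : (s:ℝ) * (((s:ℝ)-1)/(s:ℝ)) = (s:ℝ)-1 := by field_simp
          nlinarith
        rw [appReparam_right s φ _ hnot, hcast]
        field_simp
        ring
  exact ⟨hcont.continuousOn, hmono, hmaps, hsurj⟩

theorem stmt8 (d s m : ℕ) (hs : 1 ≤ s) (hm : 1 ≤ m)
    (w v : ℕ → EuclideanSpace ℝ (Fin d)) (z : EuclideanSpace ℝ (Fin d)) :
    frechetDist (polyMap (s + 1) (fun i => if i = s then z else w i))
        (polyMap (m + 1) (fun i => if i = m then z else v i))
      ≤ frechetDist (polyMap s w) (polyMap m v) := by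
  apply csInf_le_csInf
  · refine ⟨0, ?_⟩
    rintro r ⟨φ, ψ, -, -, -, -, -, -, -, -, hb⟩
    have h0 := hb 0 ⟨le_rfl, zero_le_one⟩
    exact le_trans dist_nonneg h0
  · obtain ⟨C1, hC1⟩ := polyMap_bounded s hs w
    obtain ⟨C2, hC2⟩ := polyMap_bounded m hm v
    refine ⟨C1 + C2, id, id, continuousOn_id, monotoneOn_id, Set.mapsTo_id _,
      Set.surjOn_id _, continuousOn_id, monotoneOn_id, Set.mapsTo_id _,
      Set.surjOn_id _, fun t ht => ?_⟩
    simp only [id_eq]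
    calc dist (polyMap s w t) (polyMap m v t) ≤ ‖polyMap s w t‖ + ‖polyMap m v t‖ :=
          dist_le_norm_add_norm _ _
      _ ≤ C1 + C2 := add_le_add (hC1 t ht) (hC2 t ht)
  · rintro r ⟨φ, ψ, hφc, hφm, hφmt, hφsu, hψc, hψm, hψmt, hψsu, hb⟩
    obtain ⟨hΦc, hΦm, hΦmt, hΦsu⟩ := appReparam_props s hs φ hφc hφm hφmt hφsu
    obtain ⟨hΨc, hΨm, hΨmt, hΨsu⟩ := appReparam_props m hm ψ hψc hψm hψmt hψsu
    refine ⟨appReparam s φ, appReparam m ψ, hΦc, hΦm, hΦmt, hΦsu, hΨc, hΨm, hΨmt, hΨsu, ?_⟩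
    intro t ht
    by_cases h : t ≤ 1/2
    · rw [appReparam_left s φ t ht.1 h, appReparam_left m ψ t ht.1 h]
      have h2t : (2*t) ∈ Set.Icc (0:ℝ) 1 := ⟨by linarith [ht.1], by linarith⟩
      have hφ2 := hφmt h2t
      have hψ2 := hψmt h2t
      rw [lemA s hs w z (φ (2*t)) hφ2.1 hφ2.2, lemA m hm v z (ψ (2*t)) hψ2.1 hψ2.2]
      exact hb (2*t) h2t
    · push_neg at h
      rw [appReparam_right s φ t (not_le.mpr h), appReparam_right m ψ t (not_le.mpr h)]
      have hl0 : 0 ≤ 2*t - 1 := by linarith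
      have hl1 : 2*t - 1 ≤ 1 := by linarith [ht.2]
      rw [lemB s hs w z (2*t-1) hl0 hl1, lemB m hm v z (2*t-1) hl0 hl1]
      calc dist (w (s-1) + (2*t-1) • (z - w (s-1))) (v (m-1) + (2*t-1) • (z - v (m-1)))
          ≤ dist (w (s-1)) (v (m-1)) := dist_segment _ _ _ _ hl0 hl1
        _ = dist (polyMap s w (φ 1)) (polyMap m v (ψ 1)) := by
            rw [phi_one φ hφm hφmt hφsu, phi_one ψ hψm hψmt hψsu, polyMap_one, polyMap_one]
        _ ≤ r := hb 1 ⟨zero_le_one, le_rfl⟩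
end

section
/- Let τ = (v_1, …, v_m) be a polygonal curve in ℝ^d, let k ≥ 2 be an integer, and let 1 ≤ a ≤ b ≤ m. Then inf{ d_F(σ', τ[v_1, v_a]) : σ' a polygonal curve with |σ'| ≤ k } ≤ inf{ d_F(σ', τ[v_1, v_b]) : σ' a polygonal curve with |σ'| ≤ k }, where τ[v_1, v_i] denotes the prefix polygonal curve (v_1, …, v_i). -/
open Set

set_option linter.unusedSectionVars false
set_option linter.unusedVariables false

section Aux
variable {E : Type*} [NormedAddCommGroup E] [NormedSpace ℝ E]

lemma ufacts (m : ℕ) {t : ℝ} (h0 : 0 ≤ t) (h1 : t ≤ 1) :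
    ((⌊t * ((m - 1 : ℕ) : ℝ)⌋.toNat : ℝ) ≤ t * ((m - 1 : ℕ) : ℝ)) ∧
    (t * ((m - 1 : ℕ) : ℝ) < (⌊t * ((m - 1 : ℕ) : ℝ)⌋.toNat : ℝ) + 1) ∧
    ⌊t * ((m - 1 : ℕ) : ℝ)⌋.toNat ≤ m - 1 := by
  set u := t * ((m - 1 : ℕ) : ℝ) with hu
  have hu0 : 0 ≤ u := mul_nonneg h0 (by positivity)
  have hum : u ≤ ((m - 1 : ℕ) : ℝ) := mul_le_of_le_one_left (by positivity) h1
  have hfl : ((⌊u⌋.toNat : ℤ) : ℝ) = ((⌊u⌋ : ℤ) : ℝ) := by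
    rw [Int.toNat_of_nonneg (Int.floor_nonneg.mpr hu0)]
  have h1' : ((⌊u⌋.toNat : ℕ) : ℝ) ≤ u := by
    push_cast at hfl ⊢
    rw [hfl]; exact Int.floor_le u
  refine ⟨h1', ?_, ?_⟩
  · push_cast at hfl ⊢
    rw [hfl]; exact Int.lt_floor_add_one u
  · have : ((⌊u⌋.toNat : ℕ) : ℝ) ≤ ((m - 1 : ℕ) : ℝ) := h1'.trans hum
    exact_mod_cast this

lemma polyMap_eq (m : ℕ) (f : ℕ → E) {t : ℝ} (h0 : 0 ≤ t) (h1 : t ≤ 1) :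
    polyMap m f t = f ⌊t * ((m - 1 : ℕ) : ℝ)⌋.toNat
      + (t * ((m - 1 : ℕ) : ℝ) - (⌊t * ((m - 1 : ℕ) : ℝ)⌋.toNat : ℝ)) •
        (f (min (⌊t * ((m - 1 : ℕ) : ℝ)⌋.toNat + 1) (m - 1)) - f ⌊t * ((m - 1 : ℕ) : ℝ)⌋.toNat) := by
  have h := (ufacts m h0 h1).2.2
  show f (min (⌊t * ((m - 1 : ℕ) : ℝ)⌋.toNat) (m-1)) + _ • (f (min (min (⌊t * ((m - 1 : ℕ) : ℝ)⌋.toNat) (m-1) + 1) (m - 1)) - _) = _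
  rw [min_eq_left h]

lemma polyMap_zero (m : ℕ) (f : ℕ → E) : polyMap m f 0 = f 0 := by
  simp [polyMap]

lemma polyMap_const (m : ℕ) (C : E) (t : ℝ) : polyMap m (fun _ => C) t = C := by
  simp [polyMap]

lemma polyMap_one_vertex (f : ℕ → E) (t : ℝ) : polyMap 1 f t = f 0 := by
  simp [polyMap]

lemma polyMap_prefix (a b : ℕ) (v : ℕ → E) (ha : 2 ≤ a) (hab : a ≤ b) {t : ℝ}
    (h0 : 0 ≤ t) (h1 : t ≤ 1) :
    polyMap a v t = polyMap b v (t * (((a - 1 : ℕ) : ℝ) / ((b - 1 : ℕ) : ℝ))) := by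
  set c : ℝ := ((a - 1 : ℕ) : ℝ) / ((b - 1 : ℕ) : ℝ) with hc
  have hb : 2 ≤ b := ha.trans hab
  have hbpos : (0:ℝ) < ((b - 1 : ℕ) : ℝ) := by
    have : 1 ≤ b - 1 := by omega
    exact_mod_cast Nat.lt_of_lt_of_le Nat.zero_lt_one this
  have hc0 : 0 ≤ c := by positivity
  have hc1 : c ≤ 1 := by
    rw [hc, div_le_one hbpos]
    exact_mod_cast Nat.sub_le_sub_right hab 1
  have htc0 : 0 ≤ t * c := mul_nonneg h0 hc0
  have htc1 : t * c ≤ 1 := by nlinarith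
  have harg : (t * c) * ((b - 1 : ℕ) : ℝ) = t * ((a - 1 : ℕ) : ℝ) := by
    rw [hc, mul_assoc, div_mul_cancel₀ _ hbpos.ne']
  rw [polyMap_eq a v h0 h1, polyMap_eq b v htc0 htc1, harg]
  obtain ⟨hju, huj, hja⟩ := ufacts a h0 h1
  by_cases hcase : ⌊t * ((a - 1 : ℕ) : ℝ)⌋.toNat + 1 ≤ a - 1
  · rw [min_eq_left hcase, min_eq_left (hcase.trans (Nat.sub_le_sub_right hab 1))]
  · have hja' : ⌊t * ((a - 1 : ℕ) : ℝ)⌋.toNat = a - 1 := by omega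
    have hua : t * ((a - 1 : ℕ) : ℝ) ≤ ((a - 1 : ℕ) : ℝ) :=
      mul_le_of_le_one_left (by positivity) h1
    have hueq : t * ((a - 1 : ℕ) : ℝ) = ((⌊t * ((a - 1 : ℕ) : ℝ)⌋.toNat : ℕ) : ℝ) := by
      rw [hja']; rw [hja'] at hju; exact le_antisymm hua hju
    rw [hueq]
    simp only [Int.floor_natCast, Int.toNat_natCast, sub_self, zero_smul]
lemma frechet_bddBelow (f g : ℝ → E) :
    BddBelow {r : ℝ | ∃ φ ψ : ℝ → ℝ,
      ContinuousOn φ (Set.Icc 0 1) ∧ MonotoneOn φ (Set.Icc 0 1) ∧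
      Set.MapsTo φ (Set.Icc 0 1) (Set.Icc 0 1) ∧ Set.SurjOn φ (Set.Icc 0 1) (Set.Icc 0 1) ∧
      ContinuousOn ψ (Set.Icc 0 1) ∧ MonotoneOn ψ (Set.Icc 0 1) ∧
      Set.MapsTo ψ (Set.Icc 0 1) (Set.Icc 0 1) ∧ Set.SurjOn ψ (Set.Icc 0 1) (Set.Icc 0 1) ∧
      ∀ t ∈ Set.Icc (0:ℝ) 1, dist (f (φ t)) (g (ψ t)) ≤ r} := by
  refine ⟨0, fun r hr => ?_⟩
  obtain ⟨φ, ψ, -, -, -, -, -, -, -, -, hb⟩ := hr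
  exact dist_nonneg.trans (hb 0 ⟨le_refl 0, zero_le_one⟩)

lemma frechet_le (f g : ℝ → E) (R : ℝ)
    (h : ∃ φ ψ : ℝ → ℝ,
      ContinuousOn φ (Set.Icc 0 1) ∧ MonotoneOn φ (Set.Icc 0 1) ∧
      Set.MapsTo φ (Set.Icc 0 1) (Set.Icc 0 1) ∧ Set.SurjOn φ (Set.Icc 0 1) (Set.Icc 0 1) ∧
      ContinuousOn ψ (Set.Icc 0 1) ∧ MonotoneOn ψ (Set.Icc 0 1) ∧
      Set.MapsTo ψ (Set.Icc 0 1) (Set.Icc 0 1) ∧ Set.SurjOn ψ (Set.Icc 0 1) (Set.Icc 0 1) ∧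
      ∀ t ∈ Set.Icc (0:ℝ) 1, dist (f (φ t)) (g (ψ t)) ≤ R) :
    frechetDist f g ≤ R :=
  csInf_le (frechet_bddBelow f g) h

lemma frechet_nonneg (f g : ℝ → E) : 0 ≤ frechetDist f g := by
  apply Real.sInf_nonneg
  rintro r ⟨φ, ψ, -, -, -, -, -, -, -, -, hb⟩
  exact dist_nonneg.trans (hb 0 ⟨le_refl 0, zero_le_one⟩)

lemma repar_zero {φ : ℝ → ℝ} (hm : MonotoneOn φ (Icc 0 1))
    (hmap : MapsTo φ (Icc 0 1) (Icc 0 1)) (hs : SurjOn φ (Icc 0 1) (Icc 0 1)) : φ 0 = 0 := by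
  obtain ⟨t, ht, hφt⟩ := hs (show (0:ℝ) ∈ Icc (0:ℝ) 1 from ⟨le_refl 0, zero_le_one⟩)
  have h1 : φ 0 ≤ φ t := hm ⟨le_refl 0, zero_le_one⟩ ht ht.1
  have h2 : 0 ≤ φ 0 := (hmap ⟨le_refl 0, zero_le_one⟩).1
  rw [hφt] at h1
  linarith

lemma polyMap_norm_bound (m : ℕ) (f : ℕ → E) :
    ∃ M : ℝ, ∀ x ∈ Icc (0:ℝ) 1, ‖polyMap m f x‖ ≤ M := by
  refine ⟨3 * ((Finset.range (m + 1)).sup' ⟨0, by simp⟩ fun i => ‖f i‖), fun x hx => ?_⟩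
  set B := (Finset.range (m + 1)).sup' ⟨0, by simp⟩ fun i => ‖f i‖ with hB
  have hfB : ∀ i, i ≤ m - 1 → ‖f i‖ ≤ B :=
    fun i hi => Finset.le_sup' (fun i => ‖f i‖) (Finset.mem_range.mpr (by omega))
  obtain ⟨hju, huj, hja⟩ := ufacts m hx.1 hx.2
  rw [polyMap_eq m f hx.1 hx.2]
  have hcoef : |x * ((m - 1 : ℕ) : ℝ) - (⌊x * ((m - 1 : ℕ) : ℝ)⌋.toNat : ℝ)| ≤ 1 := by
    rw [abs_le]; constructor <;> linarith
  calc ‖f ⌊x * ((m-1:ℕ):ℝ)⌋.toNat + (x * ((m-1:ℕ):ℝ) - (⌊x * ((m-1:ℕ):ℝ)⌋.toNat:ℝ)) •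
        (f (min (⌊x * ((m-1:ℕ):ℝ)⌋.toNat + 1) (m-1)) - f ⌊x * ((m-1:ℕ):ℝ)⌋.toNat)‖
      ≤ ‖f ⌊x * ((m-1:ℕ):ℝ)⌋.toNat‖ + |x * ((m-1:ℕ):ℝ) - (⌊x * ((m-1:ℕ):ℝ)⌋.toNat:ℝ)| *
          ‖f (min (⌊x * ((m-1:ℕ):ℝ)⌋.toNat + 1) (m-1)) - f ⌊x * ((m-1:ℕ):ℝ)⌋.toNat‖ := by
        refine (norm_add_le _ _).trans ?_
        rw [norm_smul, Real.norm_eq_abs]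
    _ ≤ B + 1 * (B + B) := by
        have h1 : ‖f ⌊x * ((m-1:ℕ):ℝ)⌋.toNat‖ ≤ B := hfB _ hja
        have h2 : ‖f (min (⌊x * ((m-1:ℕ):ℝ)⌋.toNat + 1) (m-1))‖ ≤ B := hfB _ (min_le_right _ _)
        have h3 := norm_sub_le (f (min (⌊x * ((m-1:ℕ):ℝ)⌋.toNat + 1) (m-1))) (f ⌊x * ((m-1:ℕ):ℝ)⌋.toNat)
        have hnn : (0:ℝ) ≤ ‖f (min (⌊x * ((m-1:ℕ):ℝ)⌋.toNat + 1) (m-1)) - f ⌊x * ((m-1:ℕ):ℝ)⌋.toNat‖ := norm_nonneg _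
        nlinarith [abs_nonneg (x * ((m-1:ℕ):ℝ) - (⌊x * ((m-1:ℕ):ℝ)⌋.toNat:ℝ))]
    _ = 3 * B := by ring

lemma frechet_set_nonempty (m₁ m₂ : ℕ) (f g : ℕ → E) :
    Set.Nonempty {r : ℝ | ∃ φ ψ : ℝ → ℝ,
      ContinuousOn φ (Set.Icc 0 1) ∧ MonotoneOn φ (Set.Icc 0 1) ∧
      Set.MapsTo φ (Set.Icc 0 1) (Set.Icc 0 1) ∧ Set.SurjOn φ (Set.Icc 0 1) (Set.Icc 0 1) ∧
      ContinuousOn ψ (Set.Icc 0 1) ∧ MonotoneOn ψ (Set.Icc 0 1) ∧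
      Set.MapsTo ψ (Set.Icc 0 1) (Set.Icc 0 1) ∧ Set.SurjOn ψ (Set.Icc 0 1) (Set.Icc 0 1) ∧
      ∀ t ∈ Set.Icc (0:ℝ) 1, dist (polyMap m₁ f (φ t)) (polyMap m₂ g (ψ t)) ≤ r} := by
  obtain ⟨M₁, hM₁⟩ := polyMap_norm_bound m₁ f
  obtain ⟨M₂, hM₂⟩ := polyMap_norm_bound m₂ g
  refine ⟨M₁ + M₂, id, id, continuousOn_id, monotoneOn_id, mapsTo_id _, surjOn_id _,
    continuousOn_id, monotoneOn_id, mapsTo_id _, surjOn_id _, fun t ht => ?_⟩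
  calc dist (polyMap m₁ f t) (polyMap m₂ g t) ≤ ‖polyMap m₁ f t‖ + ‖polyMap m₂ g t‖ :=
        dist_le_norm_add_norm _ _
    _ ≤ M₁ + M₂ := add_le_add (hM₁ t ht) (hM₂ t ht)

lemma cut_main (s : ℕ) (w : ℕ → E) {p : ℝ} (hp0 : 0 ≤ p) (hp1 : p ≤ 1) :
    ∃ (w'' : ℕ → E) (G : ℝ → ℝ),
      Monotone G ∧ Continuous G ∧ G 0 = 0 ∧ G p ≤ 1 ∧
      (∀ x, 0 ≤ x → x ≤ p → polyMap s w'' (G x) = polyMap s w x) ∧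
      (∀ θ, G p ≤ θ → θ ≤ 1 → polyMap s w'' θ = polyMap s w p) := by
  obtain ⟨hju, huj, hjs⟩ := ufacts s hp0 hp1
  set c : ℝ := ((s - 1 : ℕ) : ℝ) with hc
  have hc0 : 0 ≤ c := by positivity
  set ustar : ℝ := p * c with hustar
  set j : ℕ := ⌊ustar⌋.toNat with hj
  set D : ℝ := ustar - (j : ℝ) with hD
  have hD0 : 0 ≤ D := by simp only [hD]; linarith
  have hD1 : D < 1 := by simp only [hD]; linarith
  have hustarc : ustar ≤ c := mul_le_of_le_one_left hc0 hp1
  have hjc : (j : ℝ) ≤ c := hju.trans hustarc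
  have hDj : 0 < D → (j : ℝ) + 1 ≤ c := by
    intro hDpos
    have hjlt : (j:ℝ) < c := by
      by_contra hcon
      push_neg at hcon
      have hcj : c = (j:ℝ) := le_antisymm hcon hjc
      simp only [hD] at hDpos
      nlinarith
    rw [hc] at hjlt
    have h1 : j < s - 1 := by exact_mod_cast hjlt
    have h2 : j + 1 ≤ s - 1 := h1
    rw [hc]
    exact_mod_cast h2
  set C : E := polyMap s w p with hC
  set w'' : ℕ → E := fun i => if i ≤ j then w i else C with hw''
  set r0 : ℝ := if D = 0 then 0 else (1 - D) / D with hr0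
  have hr00 : 0 ≤ r0 := by
    rw [hr0]; split
    · exact le_refl 0
    · rename_i hne
      exact div_nonneg (by linarith) hD0
  set G : ℝ → ℝ := fun x => x + max 0 (x * c - (j : ℝ)) * r0 / c with hG
  have hGmono : Monotone G := by
    intro x y hxy
    simp only [hG]
    have h1 : max 0 (x * c - (j:ℝ)) ≤ max 0 (y * c - (j:ℝ)) :=
      max_le_max (le_refl 0) (by nlinarith)
    have h3 : max 0 (x*c - (j:ℝ)) * r0 / c ≤ max 0 (y*c - (j:ℝ)) * r0 / c := by
      rw [mul_div_assoc, mul_div_assoc]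
      exact mul_le_mul_of_nonneg_right h1 (div_nonneg hr00 hc0)
    linarith
  have hGcont : Continuous G := by
    apply continuous_id.add
    apply Continuous.div_const
    exact (continuous_const.max ((continuous_id.mul continuous_const).sub
      continuous_const)).mul continuous_const
  have hG0 : G 0 = 0 := by
    simp only [hG, zero_mul, zero_sub]
    rw [max_eq_left (neg_nonpos.mpr (Nat.cast_nonneg j))]
    simp
  -- value of G p when D > 0
  have hGpval : 0 < D → G p = ((j:ℝ) + 1) / c := by
    intro hDpos
    have hcpos : (0:ℝ) < c := lt_of_lt_of_le (by positivity) (hDj hDpos)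
    simp only [hG]
    have hDpc : p * c - (j:ℝ) = D := by rw [hD, hustar]
    rw [hDpc, max_eq_right hD0, hr0, if_neg hDpos.ne']
    have hmd : D * ((1 - D)/D) = 1 - D := by field_simp
    rw [hmd, eq_div_iff hcpos.ne', add_mul, div_mul_cancel₀ _ hcpos.ne', ← hustar]
    rw [hD]
    ring
  have hGpval0 : D = 0 → G p = p := by
    intro hDz
    simp only [hG, hr0, if_pos hDz, mul_zero, zero_div, add_zero]
  have hGp : G p ≤ 1 := by
    rcases lt_or_eq_of_le hD0 with hDpos | hDz
    · rw [hGpval hDpos]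
      have hcpos : (0:ℝ) < c := lt_of_lt_of_le (by positivity) (hDj hDpos)
      rw [div_le_one hcpos]
      exact hDj hDpos
    · rw [hGpval0 hDz.symm]; exact hp1
  -- C in explicit form when D > 0
  have hjs1 : 0 < D → j + 1 ≤ s - 1 := by
    intro hDpos
    have := hDj hDpos
    have h1 : (j:ℝ) + 1 ≤ ((s-1:ℕ):ℝ) := by rw [← hc]; exact this
    exact_mod_cast h1
  have hC_eq : 0 < D → C = w j + D • (w (j+1) - w j) := by
    intro hDpos
    rw [hC, polyMap_eq s w hp0 hp1, ← hc, ← hustar, ← hj, ← hD,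
      min_eq_left (hjs1 hDpos)]
  have hC_eq0 : D = 0 → C = w j := by
    intro hDz
    rw [hC, polyMap_eq s w hp0 hp1, ← hc, ← hustar, ← hj, ← hD, hDz, zero_smul, add_zero]
  refine ⟨w'', G, hGmono, hGcont, hG0, hGp, ?_, ?_⟩
  · -- cut identity
    intro x hx0 hxp
    have hx1 : x ≤ 1 := hxp.trans hp1
    obtain ⟨hjxu, hujx, hjxs⟩ := ufacts s hx0 hx1
    rw [← hc] at hjxu hujx
    set u : ℝ := x * c with hu
    set jx : ℕ := ⌊u⌋.toNat with hjx
    have huu : u ≤ ustar := mul_le_mul_of_nonneg_right hxp hc0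
    have hGx0 : 0 ≤ G x := by rw [← hG0]; exact hGmono hx0
    have hGx1 : G x ≤ 1 := (hGmono hxp).trans hGp
    by_cases hcase : u ≤ (j:ℝ)
    · have hGxx : G x = x := by
        simp only [hG]
        rw [← hu, max_eq_left (by linarith), zero_mul, zero_div, add_zero]
      rw [hGxx, polyMap_eq s w'' hx0 hx1, polyMap_eq s w hx0 hx1, ← hc, ← hu, ← hjx]
      have hjxj : jx ≤ j := by exact_mod_cast hjxu.trans hcase
      rcases lt_or_eq_of_le hjxj with hlt | heq
      · have h1 : w'' jx = w jx := if_pos hjxj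
        have h2 : w'' (min (jx+1) (s-1)) = w (min (jx+1) (s-1)) :=
          if_pos (le_trans (min_le_left _ _) hlt)
        rw [h1, h2]
      · have hujeq : u = (jx:ℝ) := le_antisymm (by rw [heq]; exact hcase) hjxu
        rw [hujeq, sub_self, zero_smul, zero_smul, add_zero, add_zero]
        exact if_pos hjxj
    · push_neg at hcase
      have hDpos : 0 < D := by simp only [hD]; linarith
      have hjc1 := hDj hDpos
      have hcpos : (0:ℝ) < c := lt_of_lt_of_le (by positivity) hjc1
      have hjx_eq : jx = j := by
        have e1 : (jx:ℝ) < (j:ℝ) + 1 := lt_of_le_of_lt hjxu (lt_of_le_of_lt huu huj)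
        have e2 : (j:ℝ) < (jx:ℝ) + 1 := lt_of_lt_of_le hcase (le_of_lt hujx)
        have e1' : jx < j + 1 := by exact_mod_cast e1
        have e2' : j < jx + 1 := by exact_mod_cast e2
        omega
      by_cases hux : u < ustar
      · -- interior point of the cut segment
        have hmaxu : max 0 (u - (j:ℝ)) = u - (j:ℝ) := max_eq_right (by linarith)
        have hGxc : G x * c = (j:ℝ) + (u - (j:ℝ))/D := by
          simp only [hG]
          rw [← hu, hmaxu, hr0, if_neg hDpos.ne']
          field_simp
          ring
        have hfrac0 : 0 < (u - (j:ℝ))/D := div_pos (by linarith) hDpos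
        have hfrac1 : (u - (j:ℝ))/D < 1 := by
          rw [div_lt_one hDpos]
          simp only [hD]
          linarith
        have hfloor : ⌊G x * c⌋ = (j:ℤ) := by
          rw [hGxc, Int.floor_eq_iff]
          push_cast
          constructor <;> linarith
        have hfloornat : ⌊G x * c⌋.toNat = j := by rw [hfloor]; simp
        rw [polyMap_eq s w'' hGx0 hGx1, polyMap_eq s w hx0 hx1, ← hc, ← hu, ← hjx,
          hfloornat, hjx_eq, hGxc]
        have hW1 : w'' j = w j := if_pos (le_refl j)
        have hW2 : w'' (min (j+1) (s-1)) = C := by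
          rw [min_eq_left (hjs1 hDpos)]
          exact if_neg (by omega)
        rw [hW1, hW2, min_eq_left (hjs1 hDpos), hC_eq hDpos]
        have : w j + D • (w (j+1) - w j) - w j = D • (w (j+1) - w j) := by abel
        rw [this, add_sub_cancel_left, smul_smul, div_mul_cancel₀ _ hDpos.ne']
      · have huueq : u = ustar := le_antisymm huu (not_lt.mp hux)
        have hxpe : x = p := by
          have : x * c = p * c := by rw [← hu, ← hustar, huueq]
          exact mul_right_cancel₀ hcpos.ne' this
        subst hxpe
        have hGpc : G x * c = (j:ℝ) + 1 := by
          rw [hGpval hDpos, div_mul_cancel₀ _ hcpos.ne']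
        have hfloornat : ⌊G x * c⌋.toNat = j + 1 := by
          rw [hGpc]
          norm_cast
          simp [Int.floor_intCast]
        rw [polyMap_eq s w'' hGx0 hGx1, ← hc, hfloornat, hGpc]
        push_cast
        rw [sub_self, zero_smul, add_zero]
        have : w'' (j+1) = C := if_neg (by omega)
        rw [this, hC]
    -- done cut identity
  · -- tail identity
    intro θ h1 h2
    have hθ0 : 0 ≤ θ := le_trans (by rw [← hG0]; exact hGmono hp0) h1
    obtain ⟨hjtu, hutj, hjts⟩ := ufacts s hθ0 h2
    rw [← hc] at hjtu hutj
    set ut : ℝ := θ * c with hut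
    set jt : ℕ := ⌊ut⌋.toNat with hjt
    rw [polyMap_eq s w'' hθ0 h2, ← hc, ← hut, ← hjt]
    have hGpθc : G p * c ≤ ut := mul_le_mul_of_nonneg_right h1 hc0
    rcases lt_or_eq_of_le hD0 with hDpos | hDz
    · have hcpos : (0:ℝ) < c := lt_of_lt_of_le (by positivity) (hDj hDpos)
      have hGpc : G p * c = (j:ℝ) + 1 := by
        rw [hGpval hDpos, div_mul_cancel₀ _ hcpos.ne']
      have hjlt : j < jt := by
        have h4 : (j:ℝ) + 1 ≤ ut := hGpc ▸ hGpθc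
        have h5 : (j:ℝ) < (jt:ℝ) := by linarith
        exact_mod_cast h5
      have hW1 : w'' jt = C := if_neg (by omega)
      have hW2 : w'' (min (jt+1) (s-1)) = C := by
        apply if_neg
        have : j + 1 ≤ s - 1 := hjs1 hDpos
        omega
      rw [hW1, hW2, sub_self, smul_zero, add_zero]
    · have hDz' : D = 0 := hDz.symm
      have hCj := hC_eq0 hDz'
      have hGpp := hGpval0 hDz'
      have hjle : j ≤ jt := by
        have : (j:ℝ) ≤ ustar := hju
        have h3 : ustar = (j:ℝ) := by simp only [hD] at hDz'; linarith
        have h4 : (j:ℝ) ≤ ut := by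
          rw [← h3]
          calc ustar = p * c := hustar
            _ = G p * c := by rw [hGpp]
            _ ≤ ut := hGpθc
        have : (j:ℝ) < (jt:ℝ) + 1 := lt_of_le_of_lt h4 hutj
        have := this
        exact_mod_cast Nat.lt_add_one_iff.mp (by exact_mod_cast this)
      rcases lt_or_eq_of_le hjle with hlt | heq
      · have hW1 : w'' jt = C := if_neg (by omega)
        have hW2 : w'' (min (jt+1) (s-1)) = C := by
          apply if_neg
          have := hjts
          omega
        rw [hW1, hW2, sub_self, smul_zero, add_zero]
      · rw [← heq]
        have hW1 : w'' j = w j := if_pos (le_refl j)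
        have hW2 : w'' (min (j+1) (s-1)) = w j := by
          rcases le_or_gt (j+1) (s-1) with hle | hgt
          · rw [min_eq_left hle]
            have hx : w'' (j+1) = C := if_neg (by omega)
            rw [hx, hCj]
          · have hmin : min (j+1) (s-1) = s - 1 := min_eq_right (by omega)
            have hjs' : s - 1 = j := by omega
            rw [hmin, hjs']
            exact if_pos (le_refl j)
        rw [hW1, hW2, sub_self, smul_zero, add_zero, hCj]
lemma prefix_approx (s a b : ℕ) (v w : ℕ → E) (ha : 1 ≤ a) (hab : a ≤ b) (R : ℝ)
    (φ ψ : ℝ → ℝ)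
    (hφc : ContinuousOn φ (Icc 0 1)) (hφm : MonotoneOn φ (Icc 0 1))
    (hφmap : MapsTo φ (Icc 0 1) (Icc 0 1)) (hφs : SurjOn φ (Icc 0 1) (Icc 0 1))
    (hψc : ContinuousOn ψ (Icc 0 1)) (hψm : MonotoneOn ψ (Icc 0 1))
    (hψmap : MapsTo ψ (Icc 0 1) (Icc 0 1)) (hψs : SurjOn ψ (Icc 0 1) (Icc 0 1))
    (hbound : ∀ t ∈ Icc (0:ℝ) 1, dist (polyMap s w (φ t)) (polyMap b v (ψ t)) ≤ R) :
    ∃ w' : ℕ → E, frechetDist (polyMap s w') (polyMap a v) ≤ R := by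
  have h01 : (0:ℝ) ∈ Icc (0:ℝ) 1 := ⟨le_refl 0, zero_le_one⟩
  rcases eq_or_lt_of_le ha with h1 | ha2
  · -- a = 1 : the prefix is the constant curve at `v 0`
    refine ⟨fun _ => w 0, frechet_le _ _ _ ⟨id, id, continuousOn_id, monotoneOn_id,
      mapsTo_id _, surjOn_id _, continuousOn_id, monotoneOn_id, mapsTo_id _, surjOn_id _,
      fun t ht => ?_⟩⟩
    rw [polyMap_const, ← h1, polyMap_one_vertex]
    have hB := hbound 0 h01
    rw [repar_zero hφm hφmap hφs, repar_zero hψm hψmap hψs, polyMap_zero, polyMap_zero] at hB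
    exact hB
  · -- 2 ≤ a
    have ha2' : 2 ≤ a := ha2
    have hb2 : 2 ≤ b := ha2'.trans hab
    set c : ℝ := ((a - 1 : ℕ) : ℝ) / ((b - 1 : ℕ) : ℝ) with hcdef
    have hbpos : (0:ℝ) < ((b - 1 : ℕ) : ℝ) := by
      have : 1 ≤ b - 1 := by omega
      exact_mod_cast Nat.lt_of_lt_of_le Nat.zero_lt_one this
    have hapos : (0:ℝ) < ((a - 1 : ℕ) : ℝ) := by
      have : 1 ≤ a - 1 := by omega
      exact_mod_cast Nat.lt_of_lt_of_le Nat.zero_lt_one this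
    have hc0 : 0 < c := div_pos hapos hbpos
    have hc1 : c ≤ 1 := by
      rw [hcdef, div_le_one hbpos]
      exact_mod_cast Nat.sub_le_sub_right hab 1
    obtain ⟨t0, ht0, hψt0⟩ := hψs (show c ∈ Icc (0:ℝ) 1 from ⟨hc0.le, hc1⟩)
    set p : ℝ := φ t0 with hpdef
    have hp : p ∈ Icc (0:ℝ) 1 := hφmap ht0
    obtain ⟨w'', G, hGm, hGc, hG0, hGp1, hcut, htail⟩ := cut_main s w hp.1 hp.2
    set α : ℝ → ℝ := fun t => G (φ (min (2*t) 1 * t0)) + max 0 (2*t - 1) * (1 - G p)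
      with hα
    set β : ℝ → ℝ := fun t => ψ (min (2*t) 1 * t0) / c with hβ
    -- basic facts about the inner time change
    have hinner_mem : ∀ t ∈ Icc (0:ℝ) 1, min (2*t) 1 * t0 ∈ Icc (0:ℝ) 1 := by
      intro t ht
      constructor
      · exact mul_nonneg (le_min (by linarith [ht.1]) zero_le_one) ht0.1
      · calc min (2*t) 1 * t0 ≤ 1 * t0 := mul_le_mul_of_nonneg_right (min_le_right _ _) ht0.1
          _ = t0 := one_mul t0
          _ ≤ 1 := ht0.2
    have hinner_le : ∀ t, min (2*t) 1 * t0 ≤ t0 := by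
      intro t
      calc min (2*t) 1 * t0 ≤ 1 * t0 := mul_le_mul_of_nonneg_right (min_le_right _ _) ht0.1
        _ = t0 := one_mul t0
    have hinner_mono : Monotone fun t : ℝ => min (2*t) 1 * t0 := by
      intro x y hxy
      exact mul_le_mul_of_nonneg_right (min_le_min (by linarith) (le_refl 1)) ht0.1
    have hinner_cont : Continuous fun t : ℝ => min (2*t) 1 * t0 :=
      (((continuous_const.mul continuous_id).min continuous_const).mul continuous_const)
    have hφinner_mem : ∀ t ∈ Icc (0:ℝ) 1, φ (min (2*t) 1 * t0) ∈ Icc (0:ℝ) 1 :=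
      fun t ht => hφmap (hinner_mem t ht)
    have hφinner_le : ∀ t ∈ Icc (0:ℝ) 1, φ (min (2*t) 1 * t0) ≤ p :=
      fun t ht => hφm (hinner_mem t ht) ht0 (hinner_le t)
    have hGφ_le : ∀ t ∈ Icc (0:ℝ) 1, G (φ (min (2*t) 1 * t0)) ≤ G p :=
      fun t ht => hGm (hφinner_le t ht)
    have hGφ_0 : ∀ t ∈ Icc (0:ℝ) 1, 0 ≤ G (φ (min (2*t) 1 * t0)) := by
      intro t ht
      rw [← hG0]
      exact hGm (hφinner_mem t ht).1
    have hGp0 : 0 ≤ G p := by rw [← hG0]; exact hGm hp.1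
    -- α properties
    have hφ0 : φ 0 = 0 := repar_zero hφm hφmap hφs
    have hψ0 : ψ 0 = 0 := repar_zero hψm hψmap hψs
    have hα0 : α 0 = 0 := by
      simp only [hα, mul_zero, zero_sub]
      norm_num
      rw [hφ0, hG0]
    have hα1 : α 1 = 1 := by
      simp only [hα]
      rw [show min (2*(1:ℝ)) 1 * t0 = t0 by norm_num, max_eq_right (by norm_num : (0:ℝ) ≤ 2*1 - 1)]
      rw [← hpdef]
      ring
    have hαc : ContinuousOn α (Icc 0 1) := by
      apply ContinuousOn.add
      · exact (hGc.comp_continuousOn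
          (hφc.comp hinner_cont.continuousOn (fun t ht => hinner_mem t ht)))
      · exact ((continuous_const.max ((continuous_const.mul continuous_id).sub
          continuous_const)).mul continuous_const).continuousOn
    have hαm : MonotoneOn α (Icc 0 1) := by
      intro x hx y hy hxy
      simp only [hα]
      have h1 : G (φ (min (2*x) 1 * t0)) ≤ G (φ (min (2*y) 1 * t0)) :=
        hGm (hφm (hinner_mem x hx) (hinner_mem y hy) (hinner_mono hxy))
      have h2 : max 0 (2*x - 1) * (1 - G p) ≤ max 0 (2*y - 1) * (1 - G p) :=
        mul_le_mul_of_nonneg_right (max_le_max (le_refl 0) (by linarith)) (by linarith)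
      linarith
    have hαmap : MapsTo α (Icc 0 1) (Icc 0 1) := by
      intro t ht
      constructor
      · simp only [hα]
        have := hGφ_0 t ht
        have h2 : 0 ≤ max 0 (2*t - 1) * (1 - G p) :=
          mul_nonneg (le_max_left _ _) (by linarith)
        linarith
      · simp only [hα]
        have h1 := hGφ_le t ht
        have h2 : max 0 (2*t - 1) ≤ 1 := max_le (by linarith) (by linarith [ht.2])
        nlinarith [hGp1, hGp0]
    have hαs : SurjOn α (Icc 0 1) (Icc 0 1) := by
      intro y hy
      have := intermediate_value_Icc zero_le_one hαc
      rw [hα0, hα1] at this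
      exact this hy
    -- β properties
    have hψinner_mem : ∀ t ∈ Icc (0:ℝ) 1, ψ (min (2*t) 1 * t0) ∈ Icc (0:ℝ) 1 :=
      fun t ht => hψmap (hinner_mem t ht)
    have hψinner_le : ∀ t ∈ Icc (0:ℝ) 1, ψ (min (2*t) 1 * t0) ≤ c := by
      intro t ht
      rw [← hψt0]
      exact hψm (hinner_mem t ht) ht0 (hinner_le t)
    have hβ0 : β 0 = 0 := by
      simp only [hβ]
      rw [show min (2*(0:ℝ)) 1 * t0 = 0 by norm_num, hψ0, zero_div]
    have hβ1 : β 1 = 1 := by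
      simp only [hβ]
      rw [show min (2*(1:ℝ)) 1 * t0 = t0 by norm_num, hψt0, div_self hc0.ne']
    have hβc : ContinuousOn β (Icc 0 1) :=
      (hψc.comp hinner_cont.continuousOn (fun t ht => hinner_mem t ht)).div_const c
    have hβm : MonotoneOn β (Icc 0 1) := by
      intro x hx y hy hxy
      simp only [hβ]
      have hnum := hψm (hinner_mem x hx) (hinner_mem y hy) (hinner_mono hxy)
      gcongr
    have hβmap : MapsTo β (Icc 0 1) (Icc 0 1) := by
      intro t ht
      constructor
      · exact div_nonneg (hψinner_mem t ht).1 hc0.le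
      · rw [div_le_one hc0]
        exact hψinner_le t ht
    have hβs : SurjOn β (Icc 0 1) (Icc 0 1) := by
      intro y hy
      have := intermediate_value_Icc zero_le_one hβc
      rw [hβ0, hβ1] at this
      exact this hy
    refine ⟨w'', frechet_le _ _ _ ⟨α, β, hαc, hαm, hαmap, hαs, hβc, hβm, hβmap, hβs,
      fun t ht => ?_⟩⟩
    by_cases hhalf : t ≤ 1/2
    · have hmin : min (2*t) 1 = 2*t := min_eq_left (by linarith)
      have hmax : max 0 (2*t - 1) = 0 := max_eq_left (by linarith)
      have hαt : α t = G (φ (2*t * t0)) := by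
        simp only [hα]
        rw [hmin, hmax, zero_mul, add_zero]
      have hβt : β t = ψ (2*t * t0) / c := by simp only [hβ]; rw [hmin]
      have hmem : (2*t * t0) ∈ Icc (0:ℝ) 1 := by rw [← hmin]; exact hinner_mem t ht
      have hφle : φ (2*t * t0) ≤ p := by rw [← hmin]; exact hφinner_le t ht
      have hφ0' : 0 ≤ φ (2*t * t0) := by rw [← hmin]; exact (hφinner_mem t ht).1
      have hβmem : β t ∈ Icc (0:ℝ) 1 := hβmap ht
      rw [hαt, hβt, hcut _ hφ0' hφle]
      have hprefix : polyMap a v (ψ (2*t * t0) / c) = polyMap b v (ψ (2*t * t0)) := by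
        rw [polyMap_prefix a b v ha2' hab (by rw [← hβt]; exact hβmem.1)
          (by rw [← hβt]; exact hβmem.2), ← hcdef, div_mul_cancel₀ _ hc0.ne']
      rw [hprefix]
      exact hbound _ hmem
    · push_neg at hhalf
      have hmin : min (2*t) 1 = 1 := min_eq_right (by linarith)
      have hmax : max 0 (2*t - 1) = 2*t - 1 := max_eq_right (by linarith)
      have hαt : α t = G p + (2*t - 1) * (1 - G p) := by
        simp only [hα]
        rw [hmin, hmax, one_mul, ← hpdef]
      have hβt : β t = 1 := by
        simp only [hβ]
        rw [hmin, one_mul, hψt0, div_self hc0.ne']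
      have hαge : G p ≤ α t := by
        rw [hαt]
        nlinarith [hGp1]
      have hαle : α t ≤ 1 := (hαmap ht).2
      rw [hβt, htail _ hαge hαle]
      have hprefix : polyMap a v 1 = polyMap b v (ψ t0) := by
        rw [polyMap_prefix a b v ha2' hab zero_le_one (le_refl 1), ← hcdef, one_mul, hψt0]
      rw [hprefix]
      exact hbound t0 ht0
end Aux

theorem stmt10 (d m k : ℕ) (hk : 2 ≤ k)
    (v : ℕ → EuclideanSpace ℝ (Fin d))
    (a b : ℕ) (ha : 1 ≤ a) (hab : a ≤ b) (hbm : b ≤ m) :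
    sInf {r : ℝ | ∃ (s : ℕ) (w : ℕ → EuclideanSpace ℝ (Fin d)),
        1 ≤ s ∧ s ≤ k ∧ r = frechetDist (polyMap s w) (polyMap a v)}
      ≤ sInf {r : ℝ | ∃ (s : ℕ) (w : ℕ → EuclideanSpace ℝ (Fin d)),
        1 ≤ s ∧ s ≤ k ∧ r = frechetDist (polyMap s w) (polyMap b v)} := by
  have hbddL : BddBelow {r : ℝ | ∃ (s : ℕ) (w : ℕ → EuclideanSpace ℝ (Fin d)),
      1 ≤ s ∧ s ≤ k ∧ r = frechetDist (polyMap s w) (polyMap a v)} := by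
    refine ⟨0, ?_⟩
    rintro r ⟨s, w, -, -, rfl⟩
    exact frechet_nonneg _ _
  have hneR : Set.Nonempty {r : ℝ | ∃ (s : ℕ) (w : ℕ → EuclideanSpace ℝ (Fin d)),
      1 ≤ s ∧ s ≤ k ∧ r = frechetDist (polyMap s w) (polyMap b v)} :=
    ⟨frechetDist (polyMap 1 (fun _ => 0)) (polyMap b v), 1, fun _ => 0, le_refl 1,
      by omega, rfl⟩
  apply le_csInf hneR
  rintro r ⟨s, w, hs1, hsk, rfl⟩
  refine le_of_forall_pos_le_add fun ε hε => ?_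
  obtain ⟨r', hr'mem, hr'lt⟩ := Real.lt_sInf_add_pos (frechet_set_nonempty s b w v) hε
  obtain ⟨φ, ψ, hφc, hφm, hφmap, hφs, hψc, hψm, hψmap, hψs, hd⟩ := hr'mem
  have hd' : ∀ t ∈ Icc (0:ℝ) 1, dist (polyMap s w (φ t)) (polyMap b v (ψ t))
      ≤ frechetDist (polyMap s w) (polyMap b v) + ε := fun t ht => (hd t ht).trans hr'lt.le
  obtain ⟨w', hw'⟩ := prefix_approx s a b v w ha hab _ φ ψ hφc hφm hφmap hφs hψc hψm
    hψmap hψs hd'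
  calc sInf {r : ℝ | ∃ (s : ℕ) (w : ℕ → EuclideanSpace ℝ (Fin d)),
        1 ≤ s ∧ s ≤ k ∧ r = frechetDist (polyMap s w) (polyMap a v)}
      ≤ frechetDist (polyMap s w') (polyMap a v) := csInf_le hbddL ⟨s, w', hs1, hsk, rfl⟩
    _ ≤ frechetDist (polyMap s w) (polyMap b v) + ε := hw'
end

section
/- Let d ≥ 1, let ε ∈ (0,1), let δ > 0, and let x ∈ ℝ^d. Consider the infinite axis-aligned grid in ℝ^d with x as a grid vertex and side length εδ/(2√d), and let G_x be the union of the closed grid cells that intersect the closed ball of radius (1 + ε/2)δ centered at x. Then the closed ball of radius (1 + ε/2)δ centered at x is contained in the convex hull of G_x, and the convex hull of G_x is contained in the closed ball of radius (1 + ε)δ centered at x. -/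
/-- The closed cell of the axis-aligned grid in `ℝ^d` with vertex `x` and side length `s`
indexed by `k : Fin d → ℤ`. -/
def gridCell (d : ℕ) (x : EuclideanSpace ℝ (Fin d)) (s : ℝ) (k : Fin d → ℤ) :
    Set (EuclideanSpace ℝ (Fin d)) :=
  {y | ∀ i : Fin d, x i + (k i : ℝ) * s ≤ y i ∧ y i ≤ x i + ((k i : ℝ) + 1) * s}

/-- The union of the closed grid cells (grid with vertex `x`, side length `s`) that
intersect the closed ball of radius `R` centered at `x`. -/
def gridCover (d : ℕ) (x : EuclideanSpace ℝ (Fin d)) (s R : ℝ) :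
    Set (EuclideanSpace ℝ (Fin d)) :=
  ⋃ k ∈ {k : Fin d → ℤ | (gridCell d x s k ∩ Metric.closedBall x R).Nonempty},
    gridCell d x s k

theorem stmt11 (d : ℕ) (hd : 1 ≤ d) (ε δ : ℝ) (hε : ε ∈ Set.Ioo (0:ℝ) 1) (hδ : 0 < δ)
    (x : EuclideanSpace ℝ (Fin d)) :
    Metric.closedBall x ((1 + ε / 2) * δ) ⊆
        convexHull ℝ (gridCover d x (ε * δ / (2 * Real.sqrt d)) ((1 + ε / 2) * δ)) ∧
      convexHull ℝ (gridCover d x (ε * δ / (2 * Real.sqrt d)) ((1 + ε / 2) * δ)) ⊆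
        Metric.closedBall x ((1 + ε) * δ) := by
  obtain ⟨hε0, hε1⟩ := hε
  have hdpos : (0:ℝ) < Real.sqrt d := Real.sqrt_pos.2 (by exact_mod_cast Nat.pos_of_ne_zero (by omega))
  set s : ℝ := ε * δ / (2 * Real.sqrt d) with hs
  have hs0 : 0 < s := div_pos (mul_pos hε0 hδ) (by positivity)
  have hsd : Real.sqrt d * s = ε * δ / 2 := by
    rw [hs]; field_simp
  constructor
  · intro y hy
    apply subset_convexHull
    have hcell : y ∈ gridCell d x s (fun i => ⌊(y i - x i) / s⌋) := by
      intro i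
      have h1 : (⌊(y i - x i) / s⌋ : ℝ) ≤ (y i - x i) / s := Int.floor_le _
      have h2 : (y i - x i) / s < ⌊(y i - x i) / s⌋ + 1 := Int.lt_floor_add_one _
      have h1' : (⌊(y i - x i) / s⌋ : ℝ) * s ≤ y i - x i := (le_div_iff₀ hs0).mp h1
      have h2' : y i - x i < ((⌊(y i - x i) / s⌋ : ℝ) + 1) * s := (div_lt_iff₀ hs0).mp h2
      exact ⟨by linarith, by linarith⟩
    exact Set.mem_biUnion ⟨y, hcell, hy⟩ hcell
  · apply convexHull_min _ (convex_closedBall _ _)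
    intro z hz
    simp only [gridCover, Set.mem_iUnion] at hz
    obtain ⟨k, ⟨w, hwcell, hwball⟩, hzcell⟩ := hz
    have hzw : dist z w ≤ Real.sqrt d * s := by
      rw [EuclideanSpace.dist_eq]
      have : ∑ i, dist (z i) (w i) ^ 2 ≤ ∑ _i : Fin d, s ^ 2 := by
        apply Finset.sum_le_sum
        intro i _
        have h1 := hzcell i
        have h2 := hwcell i
        have : |z i - w i| ≤ s := by
          rw [abs_le]; constructor <;> nlinarith
        calc dist (z i) (w i) ^ 2 = |z i - w i| ^ 2 := by rw [Real.dist_eq]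
          _ ≤ s ^ 2 := by nlinarith [abs_nonneg (z i - w i)]
      calc Real.sqrt (∑ i, dist (z i) (w i) ^ 2) ≤ Real.sqrt (∑ _i : Fin d, s ^ 2) :=
            Real.sqrt_le_sqrt this
        _ = Real.sqrt d * s := by
            rw [Finset.sum_const, Finset.card_univ, Fintype.card_fin, nsmul_eq_mul,
              Real.sqrt_mul (by positivity), Real.sqrt_sq hs0.le]
    have hwx : dist w x ≤ (1 + ε / 2) * δ := Metric.mem_closedBall.1 hwball
    have : dist z x ≤ dist z w + dist w x := dist_triangle z w x
    simp only [Metric.mem_closedBall]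
    nlinarith [hzw, hwx, hsd]
end

section
/- Let k ≥ 2 be an integer and let ξ = (p_1, …, p_{2k−1}) be a polygonal curve in ℝ^d with 2k − 1 vertices. Let δ = (1/2) · min{ dist(p_j, [p_{j−1}, p_{j+1}]) : j even, 2 ≤ j ≤ 2k−2 }, where [a,b] denotes the closed line segment from a to b. Then there exists a polygonal curve ζ in ℝ^d with |ζ| ≤ 2k − 2 and d_F(ξ, ζ) ≤ δ. -/
/-!
Let `j` be an even index attaining the minimum, `c` the point of `[p (j - 1), p (j + 1)]`
nearest to `p j`, and `v = (p j - c) / 2`, so that `‖v‖ = δ`. Translate every vertex by `v`,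
except `p j`, which goes to `c + v = p j - v`: each vertex moves by exactly `δ`, so the two
curves traversed in lockstep stay within `δ` of each other. In the new curve the moved vertex lies
on the segment joining its neighbours, so erasing it merely reparametrizes the curve.
-/

open Set AffineMap

lemma frechetDist_le_of_forall_dist_le {X : Type*} [PseudoMetricSpace X] {f g : ℝ → X}
    {ψ : ℝ → ℝ} {r : ℝ} (hψc : Continuous ψ) (hψm : Monotone ψ) (hψ0 : ψ 0 = 0)
    (hψ1 : ψ 1 = 1) (h : ∀ t ∈ Icc (0 : ℝ) 1, dist (f t) (g (ψ t)) ≤ r) :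
    frechetDist f g ≤ r := by
  have hmaps : MapsTo ψ (Icc 0 1) (Icc 0 1) := fun t ht =>
    ⟨hψ0 ▸ hψm ht.1, hψ1 ▸ hψm ht.2⟩
  have hsurj : SurjOn ψ (Icc 0 1) (Icc 0 1) := by
    have := intermediate_value_Icc zero_le_one hψc.continuousOn
    rwa [hψ0, hψ1] at this
  refine csInf_le ⟨0, ?_⟩ ⟨id, ψ, continuousOn_id, monotoneOn_id, mapsTo_id _, surjOn_id _,
    hψc.continuousOn, hψm.monotoneOn _, hmaps, hsurj, h⟩
  rintro s ⟨_, _, -, -, -, -, -, -, -, -, hs⟩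
  exact dist_nonneg.trans (hs 0 (left_mem_Icc.2 zero_le_one))

lemma exists_eq_add_div_of_mem_Icc {n : ℕ} (hn : 0 < n) {t : ℝ} (ht : t ∈ Icc (0 : ℝ) 1) :
    ∃ i < n, ∃ θ ∈ Icc (0 : ℝ) 1, t = (i + θ) / n := by
  have hn' : (0 : ℝ) < n := by exact_mod_cast hn
  rcases ht.2.lt_or_eq with ht1 | rfl
  · have hu : 0 ≤ t * n := mul_nonneg ht.1 hn'.le
    refine ⟨⌊t * n⌋₊, (Nat.floor_lt hu).2 (by nlinarith), t * n - ⌊t * n⌋₊,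
      ⟨sub_nonneg.2 (Nat.floor_le hu), by linarith [Nat.lt_floor_add_one (t * n)]⟩, ?_⟩
    field_simp
    ring
  · refine ⟨n - 1, by omega, 1, right_mem_Icc.2 zero_le_one, ?_⟩
    rw [Nat.cast_sub hn, Nat.cast_one, sub_add_cancel, div_self hn'.ne']

section PolygonalCurve

variable {E : Type*} [NormedAddCommGroup E] [NormedSpace ℝ E]

lemma polyMap_add_div (n : ℕ) (v : ℕ → E) {i : ℕ} (hi : i < n) {θ : ℝ}
    (hθ : θ ∈ Icc (0 : ℝ) 1) :
    polyMap (n + 1) v ((i + θ) / n) = lineMap (v i) (v (i + 1)) θ := by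
  have hn : (n : ℝ) ≠ 0 := by exact_mod_cast (Nat.zero_lt_of_lt hi).ne'
  simp only [polyMap, Nat.add_sub_cancel, div_mul_cancel₀ _ hn, lineMap_apply_module']
  rcases hθ.2.lt_or_eq with hθ1 | rfl
  · have hfl : ⌊(i : ℝ) + θ⌋ = i := by
      rw [Int.floor_eq_iff]; push_cast; constructor <;> linarith [hθ.1]
    rw [hfl, Int.toNat_natCast, min_eq_left hi.le, min_eq_left hi, add_sub_cancel_left, add_comm]
  · have hfl : ⌊(i : ℝ) + 1⌋ = ((i + 1 : ℕ) : ℤ) := by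
      rw [Int.floor_eq_iff]; push_cast; constructor <;> linarith
    rw [hfl, Int.toNat_natCast, min_eq_left hi]
    push_cast
    simp

lemma dist_lineMap_lineMap_le {x y x' y' : E} {r θ : ℝ} (hx : dist x x' ≤ r)
    (hy : dist y y' ≤ r) (hθ : θ ∈ Icc (0 : ℝ) 1) :
    dist (lineMap x y θ) (lineMap x' y' θ) ≤ r := by
  rw [dist_eq_norm, ← vsub_eq_sub, lineMap_vsub_lineMap, ← mem_closedBall_zero_iff]
  rw [dist_eq_norm] at hx hy
  exact (convex_closedBall 0 r).lineMap_mem (mem_closedBall_zero_iff.2 hx)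
    (mem_closedBall_zero_iff.2 hy) hθ

lemma dist_polyMap_polyMap_le {n : ℕ} (hn : 0 < n) {v v' : ℕ → E} {r : ℝ}
    (h : ∀ i, dist (v i) (v' i) ≤ r) {t : ℝ} (ht : t ∈ Icc (0 : ℝ) 1) :
    dist (polyMap (n + 1) v t) (polyMap (n + 1) v' t) ≤ r := by
  obtain ⟨i, hi, θ, hθ, rfl⟩ := exists_eq_add_div_of_mem_Icc hn ht
  rw [polyMap_add_div n v hi hθ, polyMap_add_div n v' hi hθ]
  exact dist_lineMap_lineMap_le (h i) (h (i + 1)) hθ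

end PolygonalCurve

/-- The identity of `ℝ`, except that it waits at `a` during `[a, a + 1]`. -/
def stallAt (a u : ℝ) : ℝ := max (min u a) (u - 1)

lemma stallAt_of_le {a u : ℝ} (h : u ≤ a) : stallAt a u = u := by
  simp only [stallAt, min_eq_left h]; exact max_eq_left (by linarith)

lemma stallAt_of_mem_Icc {a u : ℝ} (h : u ∈ Icc a (a + 1)) : stallAt a u = a := by
  simp only [stallAt, min_eq_right h.1]; exact max_eq_left (by linarith [h.2])

lemma stallAt_of_add_one_le {a u : ℝ} (h : a + 1 ≤ u) : stallAt a u = u - 1 := by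
  simp only [stallAt, min_eq_right (by linarith : a ≤ u)]; exact max_eq_right (by linarith)

@[fun_prop]
lemma continuous_stallAt (a : ℝ) : Continuous (stallAt a) := by
  unfold stallAt; fun_prop

lemma monotone_stallAt (a : ℝ) : Monotone (stallAt a) :=
  (monotone_id.min monotone_const).max fun _ _ h => sub_le_sub_right h 1

/-- Piecewise linear with `i ↦ i` for `i ≤ q`, `q + 1 ↦ q + l` and `i ↦ i - 1` for
`i ≥ q + 2`: the change of parameter that erases a vertex lying at position `l` on the segment
joining its neighbours `q` and `q + 2`. -/
def eraseParam (q l u : ℝ) : ℝ := l * stallAt (q + 1) u + (1 - l) * stallAt q u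

def eraseVertex {α : Type*} (v : ℕ → α) (j : ℕ) : ℕ → α :=
  fun i => if i < j then v i else v (i + 1)

lemma eraseVertex_of_lt {α : Type*} (v : ℕ → α) {i j : ℕ} (h : i < j) :
    eraseVertex v j i = v i :=
  if_pos h

lemma eraseVertex_of_le {α : Type*} (v : ℕ → α) {i j : ℕ} (h : j ≤ i) :
    eraseVertex v j i = v (i + 1) :=
  if_neg (not_lt.2 h)

section EraseVertex

variable {E : Type*} [NormedAddCommGroup E] [NormedSpace ℝ E]

lemma lineMap_eq_polyMap_eraseVertex {g : ℕ → E} {n q : ℕ} (hq : q + 1 ≤ n) {l : ℝ}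
    (hl : l ∈ Icc (0 : ℝ) 1) (hgl : lineMap (g q) (g (q + 2)) l = g (q + 1)) {i : ℕ}
    (hi : i < n + 1) {θ : ℝ} (hθ : θ ∈ Icc (0 : ℝ) 1) :
    lineMap (g i) (g (i + 1)) θ =
      polyMap (n + 1) (eraseVertex g (q + 1)) (eraseParam q l (i + θ) / n) := by
  obtain hiq | hiq | hiq | hiq : i < q ∨ i = q ∨ i = q + 1 ∨ q + 2 ≤ i := by omega
  · have hiq' : (i : ℝ) + 1 ≤ q := by exact_mod_cast hiq
    have : eraseParam q l (i + θ) = i + θ := by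
      simp only [eraseParam, stallAt_of_le (by linarith [hθ.2] : (i : ℝ) + θ ≤ q + 1),
        stallAt_of_le (by linarith [hθ.2] : (i : ℝ) + θ ≤ q)]
      ring
    rw [this, polyMap_add_div n _ (by omega) hθ, eraseVertex_of_lt _ (by omega),
      eraseVertex_of_lt _ (by omega)]
  · subst i
    have : eraseParam q l (q + θ) = q + θ * l := by
      simp only [eraseParam, stallAt_of_le (by linarith [hθ.2] : (q : ℝ) + θ ≤ q + 1),
        stallAt_of_mem_Icc (⟨by linarith [hθ.1], by linarith [hθ.2]⟩ :
          (q : ℝ) + θ ∈ Icc (q : ℝ) (q + 1))]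
      ring
    have hθl : θ * l ∈ Icc (0 : ℝ) 1 :=
      ⟨mul_nonneg hθ.1 hl.1, mul_le_one₀ hθ.2 hl.1 hl.2⟩
    rw [this, polyMap_add_div n _ (by omega) hθl, eraseVertex_of_lt _ (by omega),
      eraseVertex_of_le _ le_rfl, ← hgl, lineMap_lineMap_right]
  · subst i
    have : eraseParam q l ((q + 1 : ℕ) + θ) = q + (1 - (1 - θ) * (1 - l)) := by
      push_cast
      simp only [eraseParam,
        stallAt_of_mem_Icc (⟨le_add_of_nonneg_right hθ.1, by linarith [hθ.2]⟩ :
          (q : ℝ) + 1 + θ ∈ Icc ((q : ℝ) + 1) (q + 1 + 1)),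
        stallAt_of_add_one_le (by linarith [hθ.1] : (q : ℝ) + 1 ≤ q + 1 + θ)]
      ring
    have hθl : 1 - (1 - θ) * (1 - l) ∈ Icc (0 : ℝ) 1 :=
      ⟨sub_nonneg.2 <|
          mul_le_one₀ (by linarith [hθ.1]) (sub_nonneg.2 hl.2) (by linarith [hl.1]),
        sub_le_self _ (mul_nonneg (sub_nonneg.2 hθ.2) (sub_nonneg.2 hl.2))⟩
    rw [this, polyMap_add_div n _ (by omega) hθl, eraseVertex_of_lt _ (by omega),
      eraseVertex_of_le _ le_rfl, ← hgl, lineMap_lineMap_left]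
  · obtain ⟨j, rfl⟩ : ∃ j, i = j + 1 := ⟨i - 1, by omega⟩
    have hqj : (q : ℝ) + 1 ≤ j := by exact_mod_cast (by omega : q + 1 ≤ j)
    have : eraseParam q l ((j + 1 : ℕ) + θ) = j + θ := by
      push_cast
      simp only [eraseParam,
        stallAt_of_add_one_le (by linarith [hθ.1] : (q : ℝ) + 1 + 1 ≤ j + 1 + θ),
        stallAt_of_add_one_le (by linarith [hθ.1] : (q : ℝ) + 1 ≤ j + 1 + θ)]
      ring
    rw [this, polyMap_add_div n _ (by omega) hθ, eraseVertex_of_le _ (by omega),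
      eraseVertex_of_le _ (by omega)]

lemma exists_polyMap_eq_polyMap_eraseVertex {g : ℕ → E} {n q : ℕ} (hq : q + 1 ≤ n)
    (hg : g (q + 1) ∈ segment ℝ (g q) (g (q + 2))) :
    ∃ ψ : ℝ → ℝ, Continuous ψ ∧ Monotone ψ ∧ ψ 0 = 0 ∧ ψ 1 = 1 ∧
      ∀ t ∈ Icc (0 : ℝ) 1,
        polyMap (n + 2) g t = polyMap (n + 1) (eraseVertex g (q + 1)) (ψ t) := by
  rw [segment_eq_image_lineMap] at hg
  obtain ⟨l, hl, hgl⟩ := hg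
  have hqn : (q : ℝ) + 1 ≤ n := by exact_mod_cast hq
  have hn : (0 : ℝ) < n := by linarith [(Nat.cast_nonneg q : (0 : ℝ) ≤ q)]
  refine ⟨fun t => eraseParam q l (t * (n + 1)) / n, by unfold eraseParam; fun_prop,
    ?_, ?_, ?_, ?_⟩
  · have hmono : Monotone (eraseParam q l) := ((monotone_stallAt _).const_mul hl.1).add
      ((monotone_stallAt _).const_mul (sub_nonneg.2 hl.2))
    exact (hmono.comp (monotone_mul_right_of_nonneg (by positivity))).div_const hn.le
  · simp [eraseParam, stallAt_of_le (by positivity : (0 : ℝ) ≤ q + 1),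
      stallAt_of_le (Nat.cast_nonneg q : (0 : ℝ) ≤ q)]
  · simp only [eraseParam, one_mul,
      stallAt_of_add_one_le (by linarith : (q : ℝ) + 1 + 1 ≤ n + 1),
      stallAt_of_add_one_le (by linarith : (q : ℝ) + 1 ≤ n + 1)]
    field_simp
    ring
  · intro t ht
    obtain ⟨i, hi, θ, hθ, rfl⟩ := exists_eq_add_div_of_mem_Icc (Nat.succ_pos n) ht
    rw [polyMap_add_div (n + 1) g hi hθ, lineMap_eq_polyMap_eraseVertex hq hl hgl hi hθ]
    congr 3
    push_cast
    field_simp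

lemma exists_frechetDist_polyMap_le {w : ℕ → E} {n q : ℕ} (hq : q + 1 ≤ n) {c : E}
    (hc : c ∈ segment ℝ (w q) (w (q + 2))) :
    ∃ ζ : ℕ → E,
      frechetDist (polyMap (n + 2) w) (polyMap (n + 1) ζ) ≤ dist (w (q + 1)) c / 2 := by
  set v : E := (2⁻¹ : ℝ) • (w (q + 1) - c)
  have hv : ‖v‖ = dist (w (q + 1)) c / 2 := by
    rw [norm_smul, dist_eq_norm]; norm_num; ring
  set g : ℕ → E := Function.update (fun i => w i + v) (q + 1) (c + v)
  have hwg : ∀ i, dist (w i) (g i) ≤ dist (w (q + 1)) c / 2 := by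
    intro i
    rcases eq_or_ne i (q + 1) with rfl | hi
    · simp only [g, Function.update_self]
      rw [dist_eq_norm, ← hv, show w (q + 1) - (c + v) = v by simp only [v]; module]
    · simp only [g, Function.update_of_ne hi]
      rw [dist_eq_norm, ← hv]
      simp
  have hg : g (q + 1) ∈ segment ℝ (g q) (g (q + 2)) := by
    simp only [g, Function.update_self, Function.update_of_ne (by omega : q ≠ q + 1),
      Function.update_of_ne (by omega : q + 2 ≠ q + 1), add_comm _ v]
    exact (mem_segment_translate ℝ v).2 hc
  obtain ⟨ψ, hψc, hψm, hψ0, hψ1, hψ⟩ := exists_polyMap_eq_polyMap_eraseVertex hq hg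
  refine ⟨eraseVertex g (q + 1),
    frechetDist_le_of_forall_dist_le hψc hψm hψ0 hψ1 fun t ht => ?_⟩
  rw [← hψ t ht]
  exact dist_polyMap_polyMap_le (Nat.succ_pos n) hwg ht

end EraseVertex

theorem stmt15 (d k : ℕ) (hk : 2 ≤ k)
    (p : ℕ → EuclideanSpace ℝ (Fin d)) :  -- vertices p 1, …, p (2k-1) of ξ
    ∃ (s : ℕ) (ζ : ℕ → EuclideanSpace ℝ (Fin d)),
      1 ≤ s ∧ s ≤ 2 * k - 2 ∧
      frechetDist (polyMap (2 * k - 1) (fun i => p (i + 1))) (polyMap s ζ) ≤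
        (1 / 2 : ℝ) * sInf {r : ℝ | ∃ j, 2 ≤ j ∧ j ≤ 2 * k - 2 ∧ Even j ∧
          r = Metric.infDist (p j) (segment ℝ (p (j - 1)) (p (j + 1)))} := by
  set S := {r : ℝ | ∃ j, 2 ≤ j ∧ j ≤ 2 * k - 2 ∧ Even j ∧
    r = Metric.infDist (p j) (segment ℝ (p (j - 1)) (p (j + 1)))}
  have hS : S.Finite := ((finite_Iic (2 * k - 2)).image
    fun j => Metric.infDist (p j) (segment ℝ (p (j - 1)) (p (j + 1)))).subset
      fun r ⟨j, _, hj, _, hr⟩ => ⟨j, hj, hr.symm⟩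
  have hS₀ : S.Nonempty := ⟨_, 2, le_rfl, by omega, even_two, rfl⟩
  obtain ⟨j, hj2, hjk, -, hjS⟩ := hS₀.csInf_mem hS
  obtain ⟨q, rfl⟩ : ∃ q, j = q + 2 := ⟨j - 2, by omega⟩
  have hK : IsCompact (segment ℝ (p (q + 1)) (p (q + 3))) :=
    segment_eq_image_lineMap ℝ (p (q + 1)) (p (q + 3)) ▸ isCompact_Icc.image lineMap_continuous
  obtain ⟨c, hc, hcd⟩ := hK.exists_infDist_eq_dist ⟨_, left_mem_segment ℝ _ _⟩ (p (q + 2))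
  obtain ⟨ζ, hζ⟩ :=
    exists_frechetDist_polyMap_le (w := fun i => p (i + 1)) (n := 2 * k - 3) (by omega) hc
  refine ⟨2 * k - 3 + 1, ζ, by omega, by omega, ?_⟩
  rw [show 2 * k - 1 = 2 * k - 3 + 2 by omega, hjS]
  simpa [hcd, div_eq_inv_mul] using hζ
end
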